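/- arXiv:1710.10990 — 5 statements merged into one kernel-verified Lean document; each statement's English description precedes it below -/
import Mathlib

section
/- Let n ≥ 3 be an integer and let 0 < m < m_max. Then the equation f_m(r) = 0 has exactly two solutions in (0,∞); denoting them r_-(m) < r_+(m), one has f_m(r) > 0 for every r ∈ (r_-(m), r_+(m)) and f_m(r) < 0 for every r ∈ (0, r_-(m)) ∪ (r_+(m), ∞). -/
open Set Filter Topology

noncomputable def mMax (n : ℕ) : ℝ := Real.sqrt (((n : ℝ) - 2) ^ (n - 2) / (n : ℝ) ^ n)

noncomputable def fSD (n : ℕ) (m r : ℝ) : ℝ := 1 - r ^ 2 - 2 * m * r ^ (2 - (n : ℝ))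

/-- for 0 < m < m_max, f_m has exactly two positive zeros, is positive
between them and negative outside. -/
theorem stmt1 (n : ℕ) (hn : 3 ≤ n) (m : ℝ) (hm₀ : 0 < m) (hm₁ : m < mMax n) :
    ∃ rm rp : ℝ, 0 < rm ∧ rm < rp ∧
      fSD n m rm = 0 ∧ fSD n m rp = 0 ∧
      (∀ r, 0 < r → fSD n m r = 0 → r = rm ∨ r = rp) ∧
      (∀ r ∈ Set.Ioo rm rp, 0 < fSD n m r) ∧
      (∀ r ∈ Set.Ioo (0 : ℝ) rm, fSD n m r < 0) ∧
      (∀ r, rp < r → fSD n m r < 0) := by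
  have hn2 : (2:ℕ) ≤ n := by omega
  have hnR : (0:ℝ) < n := by positivity
  have hn3R : (3:ℝ) ≤ (n:ℝ) := by exact_mod_cast hn
  have hn2R : (0:ℝ) < (n:ℝ) - 2 := by linarith
  have hcast : ((n - 2 : ℕ) : ℝ) = (n:ℝ) - 2 := by
    push_cast [hn2]; ring
  set g : ℝ → ℝ := fun r => r^(n-2) - r^n - 2*m with hgdef
  set c : ℝ := Real.sqrt (((n:ℝ)-2)/n) with hcdef
  have hcpos : 0 < c := Real.sqrt_pos.mpr (by positivity)
  have hc2 : c^2 = ((n:ℝ)-2)/n := Real.sq_sqrt (by positivity)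
  have hc2lt1 : c^2 < 1 := by
    rw [hc2, div_lt_one hnR]; linarith
  have hclt1 : c < 1 := by nlinarith
  -- derivative of g
  have hderiv : ∀ r : ℝ, HasDerivAt g ((↑(n-2)) * r^(n-2-1) - (↑n) * r^(n-1)) r := by
    intro r
    exact ((hasDerivAt_pow (n-2) r).sub (hasDerivAt_pow n r)).sub_const (2*m)
  have hcont : Continuous g := by
    apply Continuous.sub
    · exact (continuous_pow _).sub (continuous_pow _)
    · exact continuous_const
  have hfactor : ∀ r : ℝ, (↑(n-2):ℝ) * r^(n-2-1) - (↑n) * r^(n-1)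
      = r^(n-2-1) * (((n:ℝ)-2) - n * r^2) := by
    intro r
    have h1 : n - 1 = (n-2-1) + 2 := by omega
    rw [h1, pow_add, hcast]; ring
  -- strict mono on [0,c]
  have hmono : StrictMonoOn g (Icc 0 c) := by
    apply strictMonoOn_of_deriv_pos (convex_Icc 0 c) hcont.continuousOn
    intro r hr
    rw [interior_Icc] at hr
    rw [(hderiv r).deriv, hfactor]
    have hr2 : r^2 < c^2 := by nlinarith [hr.1, hr.2]
    rw [hc2] at hr2
    have h2 : (n:ℝ) * r^2 < (n:ℝ) - 2 := by
      have := (mul_lt_mul_iff_right₀ hnR).mpr hr2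
      rwa [mul_div_cancel₀ _ (ne_of_gt hnR)] at this
    exact mul_pos (pow_pos hr.1 _) (by linarith)
  -- strict anti on [c,∞)
  have hanti : StrictAntiOn g (Ici c) := by
    apply strictAntiOn_of_deriv_neg (convex_Ici c) hcont.continuousOn
    intro r hr
    rw [interior_Ici] at hr
    rw [(hderiv r).deriv, hfactor]
    have hrpos : 0 < r := lt_trans hcpos hr
    have hcr : c < r := hr
    have hr2 : c^2 < r^2 := by nlinarith
    rw [hc2] at hr2
    have h2 : (n:ℝ) - 2 < (n:ℝ) * r^2 := by
      have := (mul_lt_mul_iff_right₀ hnR).mpr hr2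
      rwa [mul_div_cancel₀ _ (ne_of_gt hnR)] at this
    have := pow_pos hrpos (n-2-1)
    nlinarith
  -- g 0 and g 1
  have hg0 : g 0 = -(2*m) := by
    simp only [hgdef]
    rw [zero_pow (by omega), zero_pow (by omega)]; ring
  have hg1 : g 1 = -(2*m) := by simp [hgdef]
  -- key algebraic identity : mMax n * n = c^(n-2)
  have hmm_nonneg : 0 ≤ mMax n := Real.sqrt_nonneg _
  have hkey : mMax n * n = c^(n-2) := by
    have hA : (0:ℝ) < ((n:ℝ)-2)^(n-2)/(n:ℝ)^n := by positivity
    have hsq : (mMax n * n)^2 = (c^(n-2))^2 := by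
      rw [mul_pow, mMax, Real.sq_sqrt hA.le, ← pow_mul, mul_comm (n-2) 2, pow_mul, hc2,
        div_pow]
      have hnn : (n:ℝ)^n = (n:ℝ)^(n-2) * (n:ℝ)^2 := by
        rw [← pow_add]; congr 1; omega
      rw [hnn]
      field_simp
    rw [← Real.sqrt_sq (by positivity : (0:ℝ) ≤ mMax n * n),
        ← Real.sqrt_sq (by positivity : (0:ℝ) ≤ c^(n-2)), hsq]
  have hcn : c^n = c^(n-2) * c^2 := by rw [← pow_add]; congr 1; omega
  have hgc : g c = 2 * (mMax n - m) := by
    simp only [hgdef]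
    rw [hcn, hc2, ← hkey]
    field_simp
    ring
  have hgcpos : 0 < g c := by rw [hgc]; linarith
  -- IVT on [0, c]
  obtain ⟨rm, hrm, hgrm⟩ : ∃ rm ∈ Ioo (0:ℝ) c, g rm = 0 := by
    have := intermediate_value_Ioo hcpos.le hcont.continuousOn
      (a := (0:ℝ)) (b := c)
    have h0 : (0:ℝ) ∈ Ioo (g 0) (g c) := by
      constructor
      · rw [hg0]; linarith
      · exact hgcpos
    obtain ⟨rm, hrm, hgrm⟩ := this h0
    exact ⟨rm, hrm, hgrm⟩
  -- IVT on [c, 1]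
  obtain ⟨rp, hrp, hgrp⟩ : ∃ rp ∈ Ioo c 1, g rp = 0 := by
    have := intermediate_value_Ioo' hclt1.le hcont.continuousOn
      (a := c) (b := (1:ℝ))
    have h0 : (0:ℝ) ∈ Ioo (g 1) (g c) := by
      constructor
      · rw [hg1]; linarith
      · exact hgcpos
    obtain ⟨rp, hrp, hgrp⟩ := this h0
    exact ⟨rp, hrp, hgrp⟩
  have hrmpos : 0 < rm := hrm.1
  have hrmc : rm < c := hrm.2
  have hcrp : c < rp := hrp.1
  have hrmrp : rm < rp := lt_trans hrmc hcrp
  -- sign of g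
  have hneg_lo : ∀ r, 0 < r → r < rm → g r < 0 := by
    intro r hr hrrm
    have := hmono ⟨hr.le, le_of_lt (lt_trans hrrm hrmc)⟩ ⟨hrmpos.le, hrmc.le⟩ hrrm
    linarith [hgrm ▸ this]
  have hpos_mid : ∀ r, rm < r → r < rp → 0 < g r := by
    intro r h1 h2
    rcases le_or_gt r c with hrc | hrc
    · have := hmono ⟨hrmpos.le, hrmc.le⟩ ⟨(lt_trans hrmpos h1).le, hrc⟩ h1
      linarith [hgrm ▸ this]
    · have := hanti (le_of_lt hrc) (le_of_lt hcrp) h2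
      linarith [hgrp ▸ this]
  have hneg_hi : ∀ r, rp < r → g r < 0 := by
    intro r h
    have := hanti hcrp.le (le_of_lt (lt_trans hcrp h)) h
    linarith [hgrp ▸ this]
  -- relation between fSD and g
  have hfg : ∀ r : ℝ, 0 < r → fSD n m r = g r / r^(n-2) := by
    intro r hr
    have hr0 : r ≠ 0 := ne_of_gt hr
    have hd0 : r^(n-2) ≠ 0 := pow_ne_zero _ hr0
    have hrp2 : r ^ (2 - (n:ℝ)) = (r^(n-2:ℕ))⁻¹ := by
      rw [show (2 - (n:ℝ)) = -((n:ℝ)-2) by ring, Real.rpow_neg hr.le, ← hcast,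
        Real.rpow_natCast]
    have hrn : r^n = r^(n-2) * r^2 := by rw [← pow_add]; congr 1; omega
    simp only [fSD, hgdef, hrp2, hrn]
    field_simp
  -- finish
  refine ⟨rm, rp, hrmpos, hrmrp, ?_, ?_, ?_, ?_, ?_, ?_⟩
  · rw [hfg rm hrmpos, hgrm, zero_div]
  · rw [hfg rp (lt_trans hrmpos hrmrp), hgrp, zero_div]
  · intro r hr hfr
    have hgr : g r = 0 := by
      rw [hfg r hr] at hfr
      exact (div_eq_zero_iff.mp hfr).resolve_right (pow_ne_zero _ (ne_of_gt hr))
    rcases lt_trichotomy r rm with h | h | h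
    · exact absurd hgr (ne_of_lt (hneg_lo r hr h))
    · exact Or.inl h
    rcases lt_trichotomy r rp with h' | h' | h'
    · exact absurd hgr (ne_of_gt (hpos_mid r h h'))
    · exact Or.inr h'
    · exact absurd hgr (ne_of_lt (hneg_hi r h'))
  · intro r hr
    have hrpos : 0 < r := lt_trans hrmpos hr.1
    rw [hfg r hrpos]
    exact div_pos (hpos_mid r hr.1 hr.2) (pow_pos hrpos _)
  · intro r hr
    rw [hfg r hr.1]
    exact div_neg_of_neg_of_pos (hneg_lo r hr.1 hr.2) (pow_pos hr.1 _)
  · intro r hr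
    have hrpos : 0 < r := lt_trans (lt_trans hrmpos hrmrp) hr
    rw [hfg r hrpos]
    exact div_neg_of_neg_of_pos (hneg_hi r hr) (pow_pos hrpos _)
end

section
/- Let n ≥ 3 be an integer. The function m ↦ r_-(m) is continuous and strictly increasing on (0, m_max); moreover r_-(m) → 0 as m → 0⁺ and r_-(m) → sqrt((n-2)/n) as m → m_max⁻. -/
open Set Filter Topology

noncomputable def gSD (n : ℕ) (r : ℝ) : ℝ := (1 - r ^ 2) * r ^ (n - 2) / 2

noncomputable def cSD (n : ℕ) : ℝ := Real.sqrt (((n : ℝ) - 2) / n)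

lemma three_le_cast {n : ℕ} (hn : 3 ≤ n) : (3 : ℝ) ≤ (n : ℝ) := by exact_mod_cast hn

lemma cast_sub_two {n : ℕ} (hn : 3 ≤ n) : ((n - 2 : ℕ) : ℝ) = (n : ℝ) - 2 := by
  rw [Nat.cast_sub (by omega)]; norm_num

lemma cSD_pos {n : ℕ} (hn : 3 ≤ n) : 0 < cSD n := by
  have h3 := three_le_cast hn
  apply Real.sqrt_pos.2
  apply div_pos <;> linarith

lemma cSD_sq {n : ℕ} (hn : 3 ≤ n) : cSD n ^ 2 = ((n : ℝ) - 2) / n := by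
  have h3 := three_le_cast hn
  exact Real.sq_sqrt (by apply div_nonneg <;> linarith)

lemma gSD_continuous (n : ℕ) : Continuous (gSD n) := by
  unfold gSD; fun_prop

lemma gSD_zero {n : ℕ} (hn : 3 ≤ n) : gSD n 0 = 0 := by
  simp [gSD, zero_pow (by omega : n - 2 ≠ 0)]

lemma fSD_zero_iff {n : ℕ} (hn : 3 ≤ n) {m r : ℝ} (hr : 0 < r) :
    fSD n m r = 0 ↔ gSD n r = m := by
  have hpow : r ^ (2 - (n : ℝ)) * r ^ (n - 2 : ℕ) = 1 := by
    rw [← Real.rpow_natCast r (n - 2), cast_sub_two hn, ← Real.rpow_add hr]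
    norm_num
  unfold fSD gSD
  constructor
  · intro h
    linear_combination (r ^ (n - 2 : ℕ) / 2) * h + m * hpow
  · intro h
    linear_combination 2 * (r ^ (2 - (n : ℝ))) * h - (1 - r ^ 2) * hpow

lemma gSD_eq {n : ℕ} (hn : 3 ≤ n) (r : ℝ) : gSD n r = (r ^ (n - 2) - r ^ n) / 2 := by
  have h : r ^ n = r ^ (n - 2) * r ^ 2 := by rw [← pow_add]; congr 1; omega
  unfold gSD; rw [h]; ring

lemma gSD_strictMono {n : ℕ} (hn : 3 ≤ n) : StrictMonoOn (gSD n) (Icc 0 (cSD n)) := by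
  have hc := cSD_pos hn
  have hfun : gSD n = fun r => (r ^ (n - 2) - r ^ n) / 2 := funext fun r => gSD_eq hn r
  rw [hfun]
  apply strictMonoOn_of_deriv_pos (convex_Icc _ _)
  · fun_prop
  · intro x hx
    rw [interior_Icc] at hx
    obtain ⟨hx0, hxc⟩ := hx
    have hd : HasDerivAt (fun r : ℝ => (r ^ (n - 2) - r ^ n) / 2)
        ((((n - 2 : ℕ) : ℝ) * x ^ (n - 2 - 1) - (n : ℝ) * x ^ (n - 1)) / 2) x :=
      ((hasDerivAt_pow (n - 2) x).sub (hasDerivAt_pow n x)).div_const 2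
    rw [hd.deriv]
    have h3 := three_le_cast hn
    have hx2 : x ^ 2 < ((n : ℝ) - 2) / n := by
      rw [← cSD_sq hn]
      exact pow_lt_pow_left₀ hxc hx0.le (by norm_num)
    have hx2' : (n : ℝ) * x ^ 2 < (n : ℝ) - 2 := by
      rw [lt_div_iff₀ (by linarith : (0:ℝ) < n)] at hx2
      linarith [hx2]
    have hsplit : x ^ (n - 1) = x ^ (n - 3) * x ^ 2 := by rw [← pow_add]; congr 1; omega
    have h21 : n - 2 - 1 = n - 3 := by omega
    rw [h21, hsplit, cast_sub_two hn]
    have hxp : 0 < x ^ (n - 3) := pow_pos hx0 _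
    have : ((n : ℝ) - 2) * x ^ (n - 3) - (n : ℝ) * (x ^ (n - 3) * x ^ 2)
        = x ^ (n - 3) * (((n : ℝ) - 2) - n * x ^ 2) := by ring
    rw [this]
    have : (0:ℝ) < ((n : ℝ) - 2) - n * x ^ 2 := by linarith
    positivity
  
lemma gSD_cSD {n : ℕ} (hn : 3 ≤ n) : gSD n (cSD n) = mMax n := by
  have h3 := three_le_cast hn
  have hnn : (0 : ℝ) < n := by linarith
  have hc2 := cSD_sq hn
  have h1c : 0 ≤ 1 - cSD n ^ 2 := by
    rw [hc2]
    rw [sub_nonneg, div_le_one hnn]; linarith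
  have hgnn : 0 ≤ gSD n (cSD n) := by
    unfold gSD
    apply div_nonneg _ (by norm_num)
    exact mul_nonneg h1c (pow_nonneg (Real.sqrt_nonneg _) _)
  have hnpow : (n : ℝ) ^ n = (n : ℝ) ^ (n - 2) * (n : ℝ) ^ 2 := by
    rw [← pow_add]; congr 1; omega
  have hsq : gSD n (cSD n) ^ 2 = ((n : ℝ) - 2) ^ (n - 2) / (n : ℝ) ^ n := by
    have e1 : gSD n (cSD n) ^ 2 = (1 - cSD n ^ 2) ^ 2 * (cSD n ^ 2) ^ (n - 2) / 4 := by
      unfold gSD; ring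
    rw [e1, hc2, div_pow, hnpow]
    have hne : ((n : ℝ) - 2) ≠ 0 := by linarith
    field_simp
    ring
  unfold mMax
  rw [← hsq, Real.sqrt_sq hgnn]

lemma mMax_pos {n : ℕ} (hn : 3 ≤ n) : 0 < mMax n := by
  rw [← gSD_cSD hn]
  have := gSD_strictMono hn
  have h := this (left_mem_Icc.2 (cSD_pos hn).le) (right_mem_Icc.2 (cSD_pos hn).le) (cSD_pos hn)
  rw [gSD_zero hn] at h
  exact h
/-- m ↦ r_-(m) is continuous, strictly increasing on (0, m_max),
with r_-(m) → 0 as m → 0⁺ and r_-(m) → sqrt((n-2)/n) as m → m_max⁻. -/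
theorem stmt6 (n : ℕ) (hn : 3 ≤ n) (rm : ℝ → ℝ)
    (hrm : ∀ m ∈ Set.Ioo (0 : ℝ) (mMax n),
      IsLeast {r : ℝ | 0 < r ∧ fSD n m r = 0} (rm m)) :
    ContinuousOn rm (Set.Ioo 0 (mMax n)) ∧
    StrictMonoOn rm (Set.Ioo 0 (mMax n)) ∧
    Filter.Tendsto rm (𝓝[>] 0) (𝓝 0) ∧
    Filter.Tendsto rm (𝓝[<] (mMax n)) (𝓝 (Real.sqrt (((n : ℝ) - 2) / n))) := by
  have hc := cSD_pos hn
  have hM := mMax_pos hn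
  have hmono := gSD_strictMono hn
  -- the key structural fact
  have key : ∀ m ∈ Set.Ioo (0 : ℝ) (mMax n),
      rm m ∈ Set.Ioo 0 (cSD n) ∧ gSD n (rm m) = m := by
    intro m hm
    obtain ⟨⟨hr0, hf⟩, hleast⟩ := hrm m hm
    have hg : gSD n (rm m) = m := (fSD_zero_iff hn hr0).1 hf
    have hiv : m ∈ Set.Ioo (gSD n 0) (gSD n (cSD n)) := by
      rw [gSD_zero hn, gSD_cSD hn]; exact hm
    obtain ⟨r, hrI, hgr⟩ := intermediate_value_Ioo hc.le (gSD_continuous n).continuousOn hiv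
    have hle : rm m ≤ r := hleast ⟨hrI.1, (fSD_zero_iff hn hrI.1).2 hgr⟩
    exact ⟨⟨hr0, lt_of_le_of_lt hle hrI.2⟩, hg⟩
  have hIcc : ∀ {x : ℝ}, x ∈ Set.Ioo 0 (cSD n) → x ∈ Set.Icc 0 (cSD n) :=
    fun h => ⟨h.1.le, h.2.le⟩
  have hlt : ∀ {a b : ℝ}, a ∈ Set.Icc 0 (cSD n) → b ∈ Set.Icc 0 (cSD n) →
      (gSD n a < gSD n b ↔ a < b) := fun ha hb => hmono.lt_iff_lt ha hb
  -- strict monotonicity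
  have hsm : StrictMonoOn rm (Set.Ioo 0 (mMax n)) := by
    intro m hm m' hm' hmm'
    obtain ⟨hmem, hg⟩ := key m hm
    obtain ⟨hmem', hg'⟩ := key m' hm'
    rw [← hlt (hIcc hmem) (hIcc hmem'), hg, hg']
    exact hmm'
  refine ⟨?_, hsm, ?_, ?_⟩
  · -- continuity
    intro m0 hm0
    obtain ⟨hmem0, hg0⟩ := key m0 hm0
    rw [ContinuousWithinAt, tendsto_order]
    constructor
    · intro b hb
      rcases le_or_gt b 0 with h | h
      · filter_upwards [self_mem_nhdsWithin] with m hm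
        exact lt_of_le_of_lt h (key m hm).1.1
      · have hbc : b ∈ Set.Icc 0 (cSD n) := ⟨h.le, (hb.trans hmem0.2).le⟩
        have hgb : gSD n b < m0 := by rw [← hg0]; exact (hlt hbc (hIcc hmem0)).2 hb
        filter_upwards [mem_nhdsWithin_of_mem_nhds (Ioi_mem_nhds hgb),
          self_mem_nhdsWithin] with m h1 h2
        obtain ⟨hmem, hg⟩ := key m h2
        rw [← hlt hbc (hIcc hmem), hg]
        exact h1
    · intro b hb
      rcases le_or_gt (cSD n) b with h | h
      · filter_upwards [self_mem_nhdsWithin] with m hm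
        exact lt_of_lt_of_le (key m hm).1.2 h
      · have hbc : b ∈ Set.Icc 0 (cSD n) := ⟨(hmem0.1.trans hb).le, h.le⟩
        have hgb : m0 < gSD n b := by rw [← hg0]; exact (hlt (hIcc hmem0) hbc).2 hb
        filter_upwards [mem_nhdsWithin_of_mem_nhds (Iio_mem_nhds hgb),
          self_mem_nhdsWithin] with m h1 h2
        obtain ⟨hmem, hg⟩ := key m h2
        rw [← hlt (hIcc hmem) hbc, hg]
        exact h1
  · -- limit at 0⁺
    rw [tendsto_order]
    constructor
    · intro b hb
      filter_upwards [mem_nhdsWithin_of_mem_nhds (Iio_mem_nhds hM),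
        self_mem_nhdsWithin] with m h1 h2
      exact lt_trans hb (key m ⟨h2, h1⟩).1.1
    · intro b hb
      set r0 := min b (cSD n) / 2 with hr0def
      have hminpos : 0 < min b (cSD n) := lt_min hb hc
      have hr0pos : 0 < r0 := by positivity
      have hr0b : r0 < b := by
        have := min_le_left b (cSD n); rw [hr0def]; linarith
      have hr0c : r0 < cSD n := by
        have := min_le_right b (cSD n); rw [hr0def]; linarith
      have hgr0 : 0 < gSD n r0 := by
        have := (hlt (left_mem_Icc.2 hc.le) ⟨hr0pos.le, hr0c.le⟩).2 hr0pos
        rwa [gSD_zero hn] at this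
      filter_upwards [mem_nhdsWithin_of_mem_nhds (Iio_mem_nhds hM),
        mem_nhdsWithin_of_mem_nhds (Iio_mem_nhds hgr0),
        self_mem_nhdsWithin] with m h1 h1' h2
      obtain ⟨hmem, hg⟩ := key m ⟨h2, h1⟩
      have : rm m < r0 := by
        rw [← hlt (hIcc hmem) ⟨hr0pos.le, hr0c.le⟩, hg]
        exact h1'
      linarith
  · -- limit at mMax⁻
    have hcsd : Real.sqrt (((n : ℝ) - 2) / n) = cSD n := rfl
    rw [hcsd, tendsto_order]
    constructor
    · intro b hb
      rcases le_or_gt b 0 with h | h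
      · filter_upwards [mem_nhdsWithin_of_mem_nhds (Ioi_mem_nhds hM),
          self_mem_nhdsWithin] with m h1 h2
        exact lt_of_le_of_lt h (key m ⟨h1, h2⟩).1.1
      · set r0 := (b + cSD n) / 2 with hr0def
        have hr0b : b < r0 := by rw [hr0def]; linarith
        have hr0c : r0 < cSD n := by rw [hr0def]; linarith
        have hr0pos : 0 < r0 := lt_trans h hr0b
        have hgr0 : gSD n r0 < mMax n := by
          rw [← gSD_cSD hn]
          exact (hlt ⟨hr0pos.le, hr0c.le⟩ (right_mem_Icc.2 hc.le)).2 hr0c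
        filter_upwards [mem_nhdsWithin_of_mem_nhds (Ioi_mem_nhds hgr0),
          mem_nhdsWithin_of_mem_nhds (Ioi_mem_nhds hM),
          self_mem_nhdsWithin] with m h1 h1' h2
        obtain ⟨hmem, hg⟩ := key m ⟨h1', h2⟩
        have : r0 < rm m := by
          rw [← hlt ⟨hr0pos.le, hr0c.le⟩ (hIcc hmem), hg]
          exact h1
        linarith
    · intro b hb
      filter_upwards [mem_nhdsWithin_of_mem_nhds (Ioi_mem_nhds hM),
        self_mem_nhdsWithin] with m h1 h2
      exact lt_trans (key m ⟨h1, h2⟩).1.2 hb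
end

section
/- Let n ≥ 3 be an integer and let 0 < m < m_max. Then k_-(m) > sqrt(n), i.e. the surface gravity of the black-hole horizon of the Schwarzschild–de Sitter solution of mass m is strictly greater than sqrt(n). -/
open Set Filter Topology

set_option maxHeartbeats 1000000

private lemma bq_aux {ψ y : ℝ} (h0 : 0 < ψ) (h1 : ψ < 1) (hy : 1 < y) :
    1 + ψ * (y - 1) - ψ * (1 - ψ) * (y - 1) ^ 2 / 2 < y ^ ψ := by
  set g : ℝ → ℝ := fun w => w ^ ψ - (1 + ψ * (w - 1) - ψ * (1 - ψ) * (w - 1) ^ 2 / 2) with hg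
  have hmono : StrictMonoOn g (Ici 1) := by
    apply strictMonoOn_of_deriv_pos (convex_Ici 1)
    · apply ContinuousOn.sub
      · apply ContinuousOn.rpow_const continuousOn_id
        intro x hx
        refine Or.inl ?_
        simp only [id]
        have : (1:ℝ) ≤ x := hx
        intro h; rw [h] at this; linarith
      · fun_prop
    · intro z hz
      rw [interior_Ici] at hz
      have hz1 : (1:ℝ) < z := hz
      have hz0 : (0:ℝ) < z := by linarith
      have hd : HasDerivAt g (ψ * z ^ (ψ - 1) - (ψ - ψ * (1 - ψ) * (z - 1))) z := by
        have ha : HasDerivAt (fun w : ℝ => w ^ ψ) (ψ * z ^ (ψ - 1)) z := by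
          simpa [mul_comm] using Real.hasDerivAt_rpow_const (p := ψ) (Or.inl hz0.ne')
        have hb : HasDerivAt (fun w : ℝ => 1 + ψ * (w - 1) - ψ * (1 - ψ) * (w - 1) ^ 2 / 2)
            (ψ - ψ * (1 - ψ) * (z - 1)) z := by
          have h1' : HasDerivAt (fun w : ℝ => w - 1) 1 z := (hasDerivAt_id z).sub_const 1
          have h2' := h1'.pow 2
          have := (((h1'.const_mul ψ).const_add 1).sub
            (((h2'.const_mul (ψ * (1 - ψ)))).div_const 2))
          refine this.congr_deriv ?_
          norm_num
          ring
        exact ha.sub hb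
      rw [hd.deriv]
      have hber : z ^ ((1:ℝ) - ψ) < 1 + (1 - ψ) * (z - 1) := by
        have h := rpow_one_add_lt_one_add_mul_self (s := z - 1) (by linarith)
          (sub_ne_zero.mpr (ne_of_gt hz1)) (p := 1 - ψ) (by linarith) (by linarith)
        have he : (1:ℝ) + (z - 1) = z := by ring
        rwa [he] at h
      have hzp : (0:ℝ) < z ^ ((1:ℝ) - ψ) := Real.rpow_pos_of_pos hz0 _
      have hneg : z ^ (ψ - 1) = (z ^ ((1:ℝ) - ψ))⁻¹ := by
        rw [← Real.rpow_neg hz0.le]; ring_nf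
      have key : 1 - (1 - ψ) * (z - 1) < z ^ (ψ - 1) := by
        rw [hneg]
        have h3 : 0 < (z ^ ((1:ℝ)-ψ))⁻¹ := by positivity
        have h4 := mul_inv_cancel₀ hzp.ne'
        have hu : 0 < (1 - ψ) * (z - 1) := by nlinarith
        nlinarith [mul_pos (sub_pos.mpr hber) h3, mul_pos hu hu]
      nlinarith [key]
  have h1' := hmono (self_mem_Ici) (mem_Ici.mpr hy.le) hy
  have hg1 : g 1 = 0 := by simp [hg, Real.one_rpow]
  rw [hg1] at h1'
  simp only [hg] at h1'
  linarith

/-- the inner surface gravity satisfies k_-(m) > sqrt n for 0 < m < m_max. -/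
theorem stmt9 (n : ℕ) (hn : 3 ≤ n) (m : ℝ) (hm₀ : 0 < m) (hm₁ : m < mMax n)
    (rm : ℝ) (hrm : IsLeast {r : ℝ | 0 < r ∧ fSD n m r = 0} rm) :
    Real.sqrt n < Real.sqrt (rm ^ 2 * (1 - ((n : ℝ) - 2) * m * rm ^ (-(n : ℝ))) ^ 2 /
        (1 - (m / mMax n) ^ ((2 : ℝ) / n))) := by
  obtain ⟨⟨hrm0, hrmf⟩, hleast⟩ := hrm
  obtain ⟨k, rfl⟩ : ∃ k, n = k + 2 := ⟨n - 2, by omega⟩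
  have hk1 : 1 ≤ k := by omega
  have hkR : (1:ℝ) ≤ (k:ℝ) := by exact_mod_cast hk1
  have hk0 : (0:ℝ) < (k:ℝ) := by linarith
  have hcast : ((k+2:ℕ):ℝ) = (k:ℝ)+2 := by push_cast; ring
  -- mMax facts
  have hMM : mMax (k+2) = Real.sqrt ((k:ℝ)^k / ((k:ℝ)+2)^(k+2)) := by
    simp only [mMax, Nat.add_sub_cancel]
    congr 1
    push_cast
    ring
  have hMMpos : 0 < mMax (k+2) := by
    rw [hMM]; exact Real.sqrt_pos.mpr (by positivity)
  have hMMsq : (mMax (k+2))^2 = (k:ℝ)^k / ((k:ℝ)+2)^(k+2) := by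
    rw [hMM]; exact Real.sq_sqrt (by positivity)
  -- rewriting of fSD
  have hfr : ∀ r : ℝ, 0 < r → fSD (k+2) m r = 1 - r^2 - 2*m*(r^2/r^(k+2)) := by
    intro r hr
    simp only [fSD]
    rw [show (2 - ((k+2:ℕ):ℝ)) = ((2:ℕ):ℝ) - ((k+2:ℕ):ℝ) by push_cast; ring,
      Real.rpow_sub hr, Real.rpow_natCast, Real.rpow_natCast]
  -- equation at the root
  have heq0 : 1 - rm^2 - 2*m*(rm^2/rm^(k+2)) = 0 := by rw [← hfr rm hrm0]; exact hrmf
  have hrq : (0:ℝ) < rm^(k+2) := pow_pos hrm0 _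
  have h3' : 2*m*rm^2 = (1 - rm^2)*rm^(k+2) := by
    have h3 : 2*m*(rm^2/rm^(k+2)) = 1 - rm^2 := by linarith
    field_simp at h3
    linarith
  have hmm : 2*m = rm^k * (1 - rm^2) := by
    have := mul_right_cancel₀ (pow_ne_zero 2 hrm0.ne')
      (show (2*m)*rm^2 = (rm^k*(1-rm^2))*rm^2 by linear_combination h3')
    exact this
  have ht1 : rm^2 < 1 := by nlinarith [pow_pos hrm0 k]
  -- the critical radius
  set rc := Real.sqrt ((k:ℝ)/((k:ℝ)+2)) with hrcdef
  have hrcpos : 0 < rc := Real.sqrt_pos.mpr (by positivity)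
  have hrcsq : rc^2 = (k:ℝ)/((k:ℝ)+2) := Real.sq_sqrt (by positivity)
  have hrck : rc^k = ((k:ℝ)+2) * mMax (k+2) := by
    have hA : (rc^k)^2 = (((k:ℝ)+2) * mMax (k+2))^2 := by
      rw [mul_pow, hMMsq]
      rw [show (rc^k)^2 = (rc^2)^k by ring, hrcsq, div_pow]
      rw [show ((k:ℝ)+2)^(k+2) = ((k:ℝ)+2)^k * ((k:ℝ)+2)^2 by ring]
      field_simp
    have h0a : 0 ≤ rc^k := by positivity
    have h0b : 0 ≤ ((k:ℝ)+2) * mMax (k+2) := by positivity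
    exact (pow_left_inj₀ h0a h0b two_ne_zero).mp hA
  have hmrc : m*((k:ℝ)+2) < rc^k := by
    rw [hrck, mul_comm ((k:ℝ)+2)]
    exact mul_lt_mul_of_pos_right hm₁ (by linarith)
  -- f is positive at the critical radius
  have hfrc : 0 < fSD (k+2) m rc := by
    rw [hfr rc hrcpos]
    have hrk : 0 < rc^k := by positivity
    have e2 : rc^2/rc^(k+2) = 1/rc^k := by
      field_simp
      ring
    rw [e2, show (1:ℝ) - rc^2 - 2*m*(1/rc^k) = (1 - rc^2) - 2*m/rc^k by ring, hrcsq]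
    rw [show (1:ℝ) - (k:ℝ)/((k:ℝ)+2) = 2/((k:ℝ)+2) by field_simp; ring]
    rw [sub_pos, div_lt_div_iff₀ hrk (by linarith : (0:ℝ) < (k:ℝ)+2)]
    nlinarith
  -- f is negative at a small radius
  set ε := min m (min rc 1) with hεdef
  have hε0 : 0 < ε := lt_min hm₀ (lt_min hrcpos one_pos)
  have hεm : ε ≤ m := min_le_left _ _
  have hεrc : ε ≤ rc := le_trans (min_le_right _ _) (min_le_left _ _)
  have hε1 : ε ≤ 1 := le_trans (min_le_right _ _) (min_le_right _ _)
  have hεk : ε^k ≤ m := le_trans (pow_le_of_le_one hε0.le hε1 (by omega)) hεm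
  have hfε : fSD (k+2) m ε < 0 := by
    rw [hfr ε hε0]
    have hεkpos : 0 < ε^k := by positivity
    have e2 : ε^2/ε^(k+2) = 1/ε^k := by
      field_simp
      ring
    rw [e2]
    have h2 : (2:ℝ) ≤ 2*m*(1/ε^k) := by
      rw [mul_one_div, le_div_iff₀ hεkpos]
      linarith
    nlinarith [sq_nonneg ε]
  -- intermediate value theorem
  have hcont : ContinuousOn (fun r => fSD (k+2) m r) (Icc ε rc) := by
    simp only [fSD]
    apply ContinuousOn.sub
    · apply ContinuousOn.sub continuousOn_const
      fun_prop
    · apply ContinuousOn.mul continuousOn_const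
      apply ContinuousOn.rpow_const continuousOn_id
      intro x hx
      exact Or.inl (by simp only [id]; exact ne_of_gt (lt_of_lt_of_le hε0 hx.1))
  obtain ⟨r0, hr0mem, hr0'⟩ := intermediate_value_Icc hεrc hcont ⟨hfε.le, hfrc.le⟩
  have hr0 : fSD (k+2) m r0 = 0 := hr0'
  have hr0pos : 0 < r0 := lt_of_lt_of_le hε0 hr0mem.1
  have hrmler0 : rm ≤ r0 := hleast ⟨hr0pos, hr0⟩
  have hrmrc : rm < rc := by
    rcases lt_or_eq_of_le hr0mem.2 with h | h
    · exact lt_of_le_of_lt hrmler0 h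
    · rw [h] at hr0
      rw [hr0] at hfrc
      exact absurd hfrc (lt_irrefl 0)
  have ht : ((k:ℝ)+2) * rm^2 < k := by
    have h1 : rm^2 < rc^2 := by
      apply pow_lt_pow_left₀ hrmrc hrm0.le
      norm_num
    rw [hrcsq] at h1
    rw [mul_comm]
    exact (lt_div_iff₀ (by linarith : (0:ℝ) < (k:ℝ)+2)).mp h1
  -- algebraic phase
  obtain ⟨t, htdef⟩ : ∃ t : ℝ, t = rm^2 := ⟨_, rfl⟩
  rw [← htdef] at ht ht1
  have ht0 : 0 < t := by rw [htdef]; positivity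
  obtain ⟨a, hadef⟩ : ∃ a : ℝ, a = ((k:ℝ)+2)*t/(k:ℝ) := ⟨_, rfl⟩
  obtain ⟨b, hbdef⟩ : ∃ b : ℝ, b = ((k:ℝ)+2)*(1-t)/2 := ⟨_, rfl⟩
  have hapos : 0 < a := by rw [hadef]; positivity
  have hab : a < b := by
    rw [hadef, hbdef, div_lt_div_iff₀ hk0 two_pos]
    nlinarith [mul_lt_mul_of_pos_left ht (by linarith : (0:ℝ) < (k:ℝ)+2)]
  obtain ⟨y, hydef⟩ : ∃ y : ℝ, y = b/a := ⟨_, rfl⟩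
  have hy1 : 1 < y := by rw [hydef]; exact (one_lt_div hapos).mpr hab
  have hm' : m = rm^k * (1-t)/2 := by rw [htdef]; linarith [hmm]
  have hsq : (m/mMax (k+2))^2 = a^k * b^2 := by
    have ea : a^k = ((k:ℝ)+2)^k * t^k / (k:ℝ)^k := by rw [hadef, div_pow, mul_pow]
    have etk : t^k = (rm^k)^2 := by rw [htdef]; ring
    rw [div_pow, hMMsq, hm', ea, etk, hbdef,
      show ((k:ℝ)+2)^(k+2) = ((k:ℝ)+2)^k*((k:ℝ)+2)^2 by ring, htdef]
    have hk2 : ((k:ℝ)+2) ≠ 0 := by linarith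
    have hkk : ((k:ℝ))^k ≠ 0 := by positivity
    have hk2k : ((k:ℝ)+2)^k ≠ 0 := by positivity
    field_simp
  have hmm0 : 0 < m / mMax (k+2) := div_pos hm₀ hMMpos
  obtain ⟨ψ, hψdef⟩ : ∃ p : ℝ, p = (2:ℝ)/((k:ℝ)+2) := ⟨_, rfl⟩
  have hψ0 : 0 < ψ := by rw [hψdef]; positivity
  have hψ1 : ψ < 1 := by rw [hψdef, div_lt_one (by linarith)]; linarith
  have hxa : (m / mMax (k+2)) ^ ψ = a * y ^ ψ := by
    have e1 : (m / mMax (k+2)) ^ ψ = ((m/mMax (k+2))^2) ^ (((k:ℝ)+2)⁻¹) := by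
      have he : (((2:ℕ)):ℝ) * ((k:ℝ)+2)⁻¹ = (2:ℝ)/((k:ℝ)+2) := by
        push_cast
        ring
      rw [hψdef, ← Real.rpow_natCast (m/mMax (k+2)) 2, ← Real.rpow_mul hmm0.le, he]
    have e2 : a^k*b^2 = a^(k+2) * y^2 := by
      rw [hydef, div_pow]
      field_simp
      ring
    rw [e1, hsq, e2, Real.mul_rpow (by positivity) (by positivity)]
    congr 1
    · have he : (((k+2:ℕ)):ℝ) * ((k:ℝ)+2)⁻¹ = 1 := by
        rw [hcast]
        field_simp
      rw [← Real.rpow_natCast a (k+2), ← Real.rpow_mul hapos.le, he, Real.rpow_one]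
    · have he : (((2:ℕ)):ℝ) * ((k:ℝ)+2)⁻¹ = (2:ℝ)/((k:ℝ)+2) := by
        push_cast
        ring
      rw [hψdef, ← Real.rpow_natCast y 2, ← Real.rpow_mul (by positivity), he]
  have hbq := bq_aux hψ0 hψ1 hy1
  have hQ : a * (1 + ψ*(y-1) - ψ*(1-ψ)*(y-1)^2/2) < (m / mMax (k+2)) ^ ψ := by
    rw [hxa]
    exact mul_lt_mul_of_pos_left hbq hapos
  have e3 : ((k:ℝ)+2) * (1 - a*(1 + ψ*(y-1) - ψ*(1-ψ)*(y-1)^2/2))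
      = (((k:ℝ)+2)*t - k)^2/(4*t) := by
    rw [hψdef, hydef, hadef, hbdef]
    field_simp
    ring
  have hminv : m * (rm^(k+2))⁻¹ = (1-t)/(2*t) := by
    rw [eq_div_iff (by positivity), htdef]
    field_simp
    linear_combination rm^2 * hmm
  have e4 : t * (1 - (k:ℝ)*m*(rm^(k+2))⁻¹)^2 = (((k:ℝ)+2)*t - k)^2/(4*t) := by
    rw [show (k:ℝ)*m*(rm^(k+2))⁻¹ = (k:ℝ)*(m*(rm^(k+2))⁻¹) by ring, hminv, htdef]
    field_simp
    ring
  have hxlt1 : (m / mMax (k+2)) ^ ψ < 1 :=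
    Real.rpow_lt_one hmm0.le ((div_lt_one hMMpos).mpr hm₁) hψ0
  have hkey : ((k:ℝ)+2) * (1 - (m / mMax (k+2)) ^ ψ) < (((k:ℝ)+2)*t - k)^2/(4*t) := by
    rw [← e3]
    exact mul_lt_mul_of_pos_left (by linarith) (by linarith)
  -- final assembly
  have hrmneg : rm ^ (-((k:ℝ)+2)) = (rm^(k+2))⁻¹ := by
    rw [show -((k:ℝ)+2) = -(((k+2:ℕ)):ℝ) by rw [hcast], Real.rpow_neg hrm0.le,
      Real.rpow_natCast]
  rw [hcast, show (k:ℝ)+2-2 = (k:ℝ) by ring, hrmneg, ← hψdef, ← htdef]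
  have hD : 0 < 1 - (m / mMax (k+2)) ^ ψ := by linarith
  apply Real.sqrt_lt_sqrt (by positivity)
  rw [lt_div_iff₀ hD, e4]
  exact hkey
end

section
/- Let n ≥ 3 be an integer. The outer surface gravity function k_+ is a continuous, strictly increasing bijection from [0, m_max) onto [1, sqrt(n)); in particular k_+(m) → 1 as m → 0⁺ and k_+(m) → sqrt(n) as m → m_max⁻, so that the inverse k_+^(-1) : [1, sqrt(n)) → [0, m_max) used in the definition of the virtual mass of an outer region is well defined. -/
open Set Filter Topology

namespace SDS

noncomputable def r0 (n : ℕ) : ℝ := Real.sqrt (((n:ℝ)-2)/n)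
noncomputable def Mf (n : ℕ) (r : ℝ) : ℝ := r^(n-2) * (1 - r^2) / 2
noncomputable def vf (n : ℕ) (r : ℝ) : ℝ := (Mf n r / mMax n) ^ ((2:ℝ)/n)
noncomputable def bf (n : ℕ) (r : ℝ) : ℝ := (n:ℝ)*(1-r^2)/2
noncomputable def Hf (n : ℕ) (r : ℝ) : ℝ :=
  ((n:ℝ)*r^2 - ((n:ℝ)-2))^2 / (4*r^2*(1 - vf n r))

variable {n : ℕ}

lemma hN (hn : 3 ≤ n) : (3:ℝ) ≤ (n:ℝ) := by exact_mod_cast hn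

lemma r0_sq (hn : 3 ≤ n) : (r0 n)^2 = ((n:ℝ)-2)/n := by
  have h := hN hn
  have h1 : (0:ℝ) ≤ ((n:ℝ)-2)/n := div_nonneg (by linarith) (by linarith)
  simpa [r0] using Real.sq_sqrt h1

lemma r0_pos (hn : 3 ≤ n) : 0 < r0 n := by
  have h := hN hn
  apply Real.sqrt_pos.mpr
  apply div_pos (by linarith) (by linarith)

lemma r0_lt_one (hn : 3 ≤ n) : r0 n < 1 := by
  have h := hN hn
  have h2 : (0:ℝ) < (n:ℝ) := by linarith
  have h3 : ((n:ℝ)-2)/n < 1 := by rw [div_lt_one h2]; linarith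
  have h4 : (0:ℝ) ≤ ((n:ℝ)-2)/n := div_nonneg (by linarith) (by linarith)
  calc r0 n = Real.sqrt (((n:ℝ)-2)/n) := rfl
    _ < Real.sqrt 1 := Real.sqrt_lt_sqrt h4 (by linarith)
    _ = 1 := Real.sqrt_one

lemma mMax_sq (hn : 3 ≤ n) : (mMax n)^2 = ((n:ℝ)-2)^(n-2)/(n:ℝ)^n := by
  have h := hN hn
  have h1 : (0:ℝ) ≤ ((n:ℝ)-2)^(n-2)/(n:ℝ)^n :=
    div_nonneg (pow_nonneg (by linarith) _) (pow_nonneg (by linarith) _)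
  simpa [mMax] using Real.sq_sqrt h1

lemma mMax_pos (hn : 3 ≤ n) : 0 < mMax n := by
  have h := hN hn
  apply Real.sqrt_pos.mpr
  apply div_pos (pow_pos (by linarith) _) (pow_pos (by linarith) _)

lemma Mf_one : Mf n 1 = 0 := by simp [Mf]

lemma Mf_nonneg {r : ℝ} (h0 : 0 ≤ r) (h1 : r ≤ 1) : 0 ≤ Mf n r := by
  have : (0:ℝ) ≤ 1 - r^2 := by nlinarith
  have : (0:ℝ) ≤ r^(n-2) := pow_nonneg h0 _
  unfold Mf; positivity

lemma Mf_pos {r : ℝ} (h0 : 0 < r) (h1 : r < 1) : 0 < Mf n r := by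
  have : (0:ℝ) < 1 - r^2 := by nlinarith
  have : (0:ℝ) < r^(n-2) := pow_pos h0 _
  unfold Mf; positivity

lemma Mf_nonpos {r : ℝ} (h1 : 1 ≤ r) : Mf n r ≤ 0 := by
  have h2 : 1 - r^2 ≤ 0 := by nlinarith
  have h3 : (0:ℝ) ≤ r^(n-2) := pow_nonneg (by linarith) _
  unfold Mf
  apply div_nonpos_of_nonpos_of_nonneg _ (by norm_num)
  exact mul_nonpos_of_nonneg_of_nonpos h3 h2

lemma Mf_r0 (hn : 3 ≤ n) : Mf n (r0 n) = mMax n := by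
  have h := hN hn
  have hr0 := r0_pos hn
  have hr1 := r0_lt_one hn
  have hnn : 0 ≤ Mf n (r0 n) := Mf_nonneg hr0.le hr1.le
  rw [← Real.sqrt_sq hnn, mMax]
  congr 1
  have hsq := r0_sq hn
  obtain ⟨k, rfl⟩ : ∃ k, n = k + 3 := ⟨n - 3, by omega⟩
  have hk2 : k + 3 - 2 = k + 1 := by omega
  have hc : ((k+3:ℕ):ℝ) = (k:ℝ)+3 := by push_cast; ring
  rw [Mf, hk2]
  rw [div_pow, mul_pow, ← pow_mul, mul_comm (k+1) 2, pow_mul, hsq]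
  push_cast
  have hk3 : (0:ℝ) < (k:ℝ)+3 := by positivity
  rw [show (k+3:ℕ) = (k+1)+2 by omega, pow_add]
  simp only [div_pow]
  field_simp
  ring

lemma Mf_eq (hn : 3 ≤ n) (r : ℝ) : Mf n r = (r^(n-2) - r^n)/2 := by
  obtain ⟨k, rfl⟩ : ∃ k, n = k + 3 := ⟨n - 3, by omega⟩
  rw [Mf, show k+3-2 = k+1 by omega, show k+3 = (k+1)+2 by omega, pow_add]
  ring

lemma Mf_hasDeriv (hn : 3 ≤ n) {r : ℝ} :
    HasDerivAt (Mf n) (-(r^(n-3) * ((n:ℝ)*r^2 - ((n:ℝ)-2))) / 2) r := by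
  have h1 : HasDerivAt (fun r : ℝ => (r^(n-2) - r^n)/2)
      ((((n-2:ℕ):ℝ)*r^(n-3) - ((n:ℕ):ℝ)*r^(n-1))/2) r := by
    have h2 : HasDerivAt (fun r : ℝ => r^(n-2)) (((n-2:ℕ):ℝ)*r^(n-2-1)) r :=
      hasDerivAt_pow (n-2) r
    have h3 : HasDerivAt (fun r : ℝ => r^n) (((n:ℕ):ℝ)*r^(n-1)) r := hasDerivAt_pow n r
    rw [show n-2-1 = n-3 by omega] at h2
    exact (h2.sub h3).div_const 2
  have h4 : (fun r : ℝ => (r^(n-2) - r^n)/2) = Mf n := by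
    funext r; rw [Mf_eq hn]
  rw [h4] at h1
  convert h1 using 1
  obtain ⟨k, rfl⟩ : ∃ k, n = k + 3 := ⟨n - 3, by omega⟩
  rw [show k+3-2 = k+1 by omega, show k+3-3 = k by omega, show k+3-1 = k+2 by omega]
  push_cast
  rw [pow_add]
  ring

lemma Mf_anti (hn : 3 ≤ n) : StrictAntiOn (Mf n) (Set.Icc (r0 n) 1) := by
  have hr0 := r0_pos hn
  have hcont : ContinuousOn (Mf n) (Set.Icc (r0 n) 1) := by
    apply Continuous.continuousOn
    have : Mf n = fun r => r^(n-2) * (1 - r^2) / 2 := rfl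
    rw [this]; continuity
  apply strictAntiOn_of_deriv_neg (convex_Icc _ _) hcont
  intro r hr
  rw [interior_Icc] at hr
  rw [(Mf_hasDeriv hn).deriv]
  have hrpos : 0 < r := lt_trans hr0 hr.1
  have hw : 0 < (n:ℝ)*r^2 - ((n:ℝ)-2) := by
    have h2 : (r0 n)^2 < r^2 := by nlinarith [hr.1, hr0]
    rw [r0_sq hn] at h2
    have hNpos : (0:ℝ) < n := by have := hN hn; linarith
    have := (div_lt_iff₀ hNpos).mp h2
    nlinarith
  have hp : 0 < r^(n-3) := pow_pos hrpos _
  have : 0 < r^(n-3) * ((n:ℝ)*r^2 - ((n:ℝ)-2)) := mul_pos hp hw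
  linarith

lemma Mf_lt_mMax (hn : 3 ≤ n) {r : ℝ} (hr : r ∈ Set.Ioc (r0 n) 1) : Mf n r < mMax n := by
  rw [← Mf_r0 hn]
  exact Mf_anti hn ⟨le_refl _, (r0_lt_one hn).le⟩ ⟨hr.1.le, hr.2⟩ hr.1

lemma exists_root (hn : 3 ≤ n) {m : ℝ} (hm : m ∈ Set.Ioo 0 (mMax n)) :
    ∃ r ∈ Set.Ioo (r0 n) 1, Mf n r = m := by
  have hcont : ContinuousOn (Mf n) (Set.Icc (r0 n) 1) := by
    apply Continuous.continuousOn
    have : Mf n = fun r => r^(n-2) * (1 - r^2) / 2 := rfl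
    rw [this]; continuity
  have h1 := intermediate_value_Ioo' (r0_lt_one hn).le hcont
  rw [Mf_one, Mf_r0 hn] at h1
  obtain ⟨r, hr, hMr⟩ := h1 hm
  exact ⟨r, hr, hMr⟩

lemma rpow_two_sub (hn : 3 ≤ n) {r : ℝ} (hr : 0 < r) :
    r ^ (2 - (n:ℝ)) = r^2 / r^n := by
  rw [Real.rpow_sub hr]
  congr 1
  · rw [show (2:ℝ) = ((2:ℕ):ℝ) by norm_num, Real.rpow_natCast]
  · rw [Real.rpow_natCast]

lemma fSD_zero_iff (hn : 3 ≤ n) {m r : ℝ} (hr : 0 < r) :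
    fSD n m r = 0 ↔ Mf n r = m := by
  have hrn : (0:ℝ) < r^n := pow_pos hr n
  have hr2 : (0:ℝ) < r^2 := pow_pos hr 2
  have key : fSD n m r = ((1 - r^2) * r^n - 2*m*r^2) / r^n := by
    rw [fSD, rpow_two_sub hn hr]
    field_simp
  rw [key, div_eq_zero_iff]
  have hpow : r^n = r^(n-2) * r^2 := by
    rw [← pow_add, show n-2+2 = n by omega]
  constructor
  · rintro (h | h)
    · rw [Mf]
      have h2 : ((1-r^2) * r^(n-2) - 2*m) * r^2 = 0 := by
        rw [hpow] at h; ring_nf; ring_nf at h; linarith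
      have h3 : (1-r^2) * r^(n-2) - 2*m = 0 := by
        rcases mul_eq_zero.mp h2 with h4 | h4
        · exact h4
        · exact absurd h4 (ne_of_gt hr2)
      field_simp
      linarith
    · exact absurd h (ne_of_gt hrn)
  · intro h
    left
    rw [Mf] at h
    have h3 : r^(n-2) * (1-r^2) = 2*m := by
      field_simp at h
      linarith
    rw [hpow]
    nlinarith [h3]

lemma isGreatest_root (hn : 3 ≤ n) {m r : ℝ} (hm : m ∈ Set.Ioo 0 (mMax n))
    (hr : r ∈ Set.Ioo (r0 n) 1) (hMr : Mf n r = m) :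
    IsGreatest {r : ℝ | 0 < r ∧ fSD n m r = 0} r := by
  have hr0 := r0_pos hn
  have hrpos : 0 < r := lt_trans hr0 hr.1
  constructor
  · exact ⟨hrpos, (fSD_zero_iff hn hrpos).mpr hMr⟩
  · rintro s ⟨hs0, hs⟩
    have hMs : Mf n s = m := (fSD_zero_iff hn hs0).mp hs
    have hs1 : s < 1 := by
      by_contra hcon
      push_neg at hcon
      have := Mf_nonpos (n := n) hcon
      rw [hMs] at this
      linarith [hm.1]
    by_contra hcon
    push_neg at hcon
    have hsIcc : s ∈ Set.Icc (r0 n) 1 := ⟨le_trans hr.1.le hcon.le, hs1.le⟩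
    have hrIcc : r ∈ Set.Icc (r0 n) 1 := ⟨hr.1.le, hr.2.le⟩
    have := Mf_anti hn hrIcc hsIcc hcon
    rw [hMr, hMs] at this
    linarith

lemma vf_one (hn : 3 ≤ n) : vf n 1 = 0 := by
  have h := hN hn
  rw [vf, Mf_one, zero_div]
  exact Real.zero_rpow (by positivity)

lemma vf_pos (hn : 3 ≤ n) {r : ℝ} (hr : r ∈ Set.Ioo (r0 n) 1) : 0 < vf n r := by
  have hrpos : 0 < r := lt_trans (r0_pos hn) hr.1
  exact Real.rpow_pos_of_pos (div_pos (Mf_pos hrpos hr.2) (mMax_pos hn)) _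

lemma vf_lt_one (hn : 3 ≤ n) {r : ℝ} (hr : r ∈ Set.Ioc (r0 n) 1) : vf n r < 1 := by
  have h := hN hn
  have hrpos : 0 < r := lt_trans (r0_pos hn) hr.1
  apply Real.rpow_lt_one
  · exact div_nonneg (Mf_nonneg hrpos.le hr.2) (mMax_pos hn).le
  · rw [div_lt_one (mMax_pos hn)]
    exact Mf_lt_mMax hn hr
  · positivity

lemma vf_r0 (hn : 3 ≤ n) : vf n (r0 n) = 1 := by
  rw [vf, Mf_r0 hn, div_self (ne_of_gt (mMax_pos hn)), Real.one_rpow]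

lemma vf_contAt (r : ℝ) : ContinuousAt (vf n) r := by
  have h1 : ContinuousAt (fun r => Mf n r / mMax n) r := by
    apply ContinuousAt.div_const
    have : Continuous (Mf n) := by
      have : Mf n = fun r => r^(n-2) * (1 - r^2) / 2 := rfl
      rw [this]; continuity
    exact this.continuousAt
  exact h1.rpow_const (Or.inr (by positivity))

lemma bf_pos {r : ℝ} (hn : 3 ≤ n) (h0 : 0 < r) (h1 : r < 1) : 0 < bf n r := by
  have h := hN hn
  have : 0 < 1 - r^2 := by nlinarith
  rw [bf]; positivity

lemma bf_lt_one (hn : 3 ≤ n) {r : ℝ} (hr : r0 n < r) : bf n r < 1 := by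
  have h := hN hn
  have hr0 := r0_pos hn
  have h2 : (r0 n)^2 < r^2 := by nlinarith
  rw [r0_sq hn] at h2
  have hNpos : (0:ℝ) < n := by linarith
  have h3 := (div_lt_iff₀ hNpos).mp h2
  rw [bf]
  nlinarith

lemma r2_eq (hn : 3 ≤ n) (r : ℝ) : r^2 = ((n:ℝ) - 2*bf n r)/n := by
  have h := hN hn
  rw [bf]; field_simp; ring

lemma sqrt_arg_eq (hn : 3 ≤ n) {r : ℝ} (hr : r ∈ Set.Ioo (r0 n) 1) :
    r^2 * (1 - ((n:ℝ)-2)*(Mf n r)*r^(-(n:ℝ)))^2 / (1 - (Mf n r/mMax n)^((2:ℝ)/n))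
    = Hf n r := by
  have hrpos : 0 < r := lt_trans (r0_pos hn) hr.1
  have hrn : (0:ℝ) < r^n := pow_pos hrpos n
  have hpow : r^n = r^(n-2) * r^2 := by
    rw [← pow_add, show n-2+2 = n by omega]
  have hneg : r ^ (-(n:ℝ)) = (r^n)⁻¹ := by
    rw [Real.rpow_neg hrpos.le, Real.rpow_natCast]
  have h1 : 1 - ((n:ℝ)-2)*(Mf n r)*r^(-(n:ℝ)) = ((n:ℝ)*r^2-((n:ℝ)-2))/(2*r^2) := by
    rw [hneg, Mf, hpow]
    field_simp
    ring
  rw [h1, div_pow]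
  have h2 : r^2 * (((n:ℝ)*r^2-((n:ℝ)-2))^2/(2*r^2)^2) = ((n:ℝ)*r^2-((n:ℝ)-2))^2/(4*r^2) := by
    field_simp
    ring
  rw [h2, Hf, div_div]
  rfl

lemma kp_eq (hn : 3 ≤ n) {kp : ℝ → ℝ}
    (hk : ∀ m ∈ Set.Ioo (0 : ℝ) (mMax n), ∀ rp : ℝ,
      IsGreatest {r : ℝ | 0 < r ∧ fSD n m r = 0} rp →
      kp m = Real.sqrt (rp ^ 2 * (1 - ((n : ℝ) - 2) * m * rp ^ (-(n : ℝ))) ^ 2 /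
        (1 - (m / mMax n) ^ ((2 : ℝ) / n))))
    {m r : ℝ} (hm : m ∈ Set.Ioo 0 (mMax n)) (hr : r ∈ Set.Ioo (r0 n) 1)
    (hMr : Mf n r = m) : kp m = Real.sqrt (Hf n r) := by
  rw [hk m hm r (isGreatest_root hn hm hr hMr)]
  congr 1
  subst hMr
  exact sqrt_arg_eq hn hr

lemma Msq_eq (hn : 3 ≤ n) (r : ℝ) :
    (Mf n r / mMax n)^2 = (((n:ℝ)-2*bf n r)/((n:ℝ)-2))^(n-2) * (bf n r)^2 := by
  have h := hN hn
  have hc2 : (0:ℝ) < (n:ℝ)-2 := by linarith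
  have hcn : (0:ℝ) < (n:ℝ) := by linarith
  rw [div_pow, mMax_sq hn, Mf, bf]
  obtain ⟨k, rfl⟩ : ∃ k, n = k + 3 := ⟨n - 3, by omega⟩
  rw [show k+3-2 = k+1 by omega]
  rw [show (r ^ (k + 1) * (1 - r ^ 2) / 2)^2 = (r^2)^(k+1) * (1-r^2)^2/4 by
    rw [div_pow, mul_pow, ← pow_mul, mul_comm (k+1) 2, pow_mul]; norm_num]
  push_cast at *
  have he : ((k:ℝ)+3) - 2*((k+3)*(1-r^2)/2) = ((k:ℝ)+3)*r^2 := by ring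
  rw [he]
  rw [div_pow ((((k:ℝ)+3))*r^2), mul_pow ((k:ℝ)+3) (r^2)]
  rw [show (k+3:ℕ) = (k+1)+2 by omega, pow_add]
  field_simp
  ring

lemma vf_eq (hn : 3 ≤ n) {r : ℝ} (hr : r ∈ Set.Ioo (r0 n) 1) :
    vf n r = bf n r * ((((n:ℝ)-2*bf n r)/(((n:ℝ)-2)*bf n r)) ^ (((n:ℝ)-2)/(n:ℝ))) := by
  have h := hN hn
  have hrpos : 0 < r := lt_trans (r0_pos hn) hr.1
  have hb0 : 0 < bf n r := bf_pos hn hrpos hr.2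
  have hb1 : bf n r < 1 := bf_lt_one hn hr.1
  have hA0 : (0:ℝ) < ((n:ℝ)-2*bf n r)/((n:ℝ)-2) := by
    apply div_pos (by linarith) (by linarith)
  have hx0 : 0 < Mf n r / mMax n := div_pos (Mf_pos hrpos hr.2) (mMax_pos hn)
  have h2 := Msq_eq hn r
  have h3 : vf n r = ((Mf n r / mMax n)^2)^((1:ℝ)/n) := by
    rw [vf, ← Real.rpow_natCast (Mf n r / mMax n) 2, ← Real.rpow_mul hx0.le]
    congr 1
    push_cast
    ring
  rw [h3, h2]
  have h4 : ((((n:ℝ)-2*bf n r)/((n:ℝ)-2))^(n-2) * (bf n r)^2 : ℝ)^((1:ℝ)/n)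
      = ((((n:ℝ)-2*bf n r)/((n:ℝ)-2))^(n-2):ℝ)^((1:ℝ)/n) * ((bf n r)^2:ℝ)^((1:ℝ)/n) :=
    Real.mul_rpow (pow_nonneg hA0.le _) (by positivity)
  rw [h4]
  have h5 : ((((n:ℝ)-2*bf n r)/((n:ℝ)-2))^(n-2):ℝ)^((1:ℝ)/n)
      = (((n:ℝ)-2*bf n r)/((n:ℝ)-2))^(((n:ℝ)-2)/n) := by
    rw [← Real.rpow_natCast (((n:ℝ)-2*bf n r)/((n:ℝ)-2)) (n-2), ← Real.rpow_mul hA0.le]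
    congr 1
    have hc : ((n-2:ℕ):ℝ) = (n:ℝ)-2 := by
      have h2n : (2:ℕ) ≤ n := by omega
      push_cast [Nat.cast_sub h2n]
      ring
    rw [hc]
    ring
  have h6 : ((bf n r)^2:ℝ)^((1:ℝ)/n) = (bf n r)^((2:ℝ)/n) := by
    rw [← Real.rpow_natCast (bf n r) 2, ← Real.rpow_mul hb0.le]
    congr 1
    push_cast
    ring
  have h7 : (bf n r)^((2:ℝ)/n) = bf n r / (bf n r)^(((n:ℝ)-2)/n) := by
    rw [show (2:ℝ)/n = 1 - ((n:ℝ)-2)/n by field_simp; ring, Real.rpow_sub hb0, Real.rpow_one]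
  rw [h5, h6, h7]
  have h8 : ((((n:ℝ)-2*bf n r)/((n:ℝ)-2))/(bf n r)) ^ (((n:ℝ)-2)/(n:ℝ))
      = (((n:ℝ)-2*bf n r)/((n:ℝ)-2))^(((n:ℝ)-2)/n) / (bf n r)^(((n:ℝ)-2)/n) :=
    Real.div_rpow hA0.le hb0.le _
  have h9 : (((n:ℝ)-2*bf n r)/((n:ℝ)-2))/(bf n r) = ((n:ℝ)-2*bf n r)/(((n:ℝ)-2)*(bf n r)) :=
    div_div _ _ _
  rw [← h9, h8]
  ring

lemma key_log {N x : ℝ} (hN3 : 3 ≤ N) (hx : x ∈ Set.Ioo (0:ℝ) 1) :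
    Real.log ((N-1-x)/(1+(N-3)*x)) < ((N-2)/N) * Real.log ((N-2*x)/((N-2)*x)) := by
  set F : ℝ → ℝ := fun y => ((N-2)/N)*(Real.log (N-2*y) - Real.log (N-2) - Real.log y)
    + Real.log (1+(N-3)*y) - Real.log (N-1-y) with hF
  have hNpos : (0:ℝ) < N := by linarith
  -- positivity facts on Ioc 0 1
  have hpos : ∀ y ∈ Set.Ioc (0:ℝ) 1, 0 < N-2*y ∧ 0 < 1+(N-3)*y ∧ 0 < N-1-y := by
    intro y hy
    refine ⟨by nlinarith [hy.1, hy.2], by nlinarith [hy.1, hy.2], by nlinarith [hy.1, hy.2]⟩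
  have hderiv : ∀ y ∈ Set.Ioo (0:ℝ) 1, HasDerivAt F
      (((N-2)/N)*((-2)/(N-2*y) - 1/y) + (N-3)/(1+(N-3)*y) + (-(-1))/(N-1-y)) y := by
    intro y hy
    obtain ⟨p1, p2, p3⟩ := hpos y ⟨hy.1, hy.2.le⟩
    have d1 : HasDerivAt (fun y : ℝ => N-2*y) (-2) y := by
      simpa using ((hasDerivAt_id y).const_mul (2:ℝ)).const_sub N
    have d2 : HasDerivAt (fun y : ℝ => 1+(N-3)*y) (N-3) y := by
      simpa using ((hasDerivAt_id y).const_mul (N-3)).const_add 1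
    have d3 : HasDerivAt (fun y : ℝ => N-1-y) (-1) y := by
      simpa using (hasDerivAt_id y).const_sub (N-1)
    have l1 : HasDerivAt (fun y : ℝ => Real.log (N-2*y)) ((-2)/(N-2*y)) y :=
      d1.log (ne_of_gt p1)
    have l2 : HasDerivAt (fun y : ℝ => Real.log (1+(N-3)*y)) ((N-3)/(1+(N-3)*y)) y :=
      d2.log (ne_of_gt p2)
    have l3 : HasDerivAt (fun y : ℝ => Real.log (N-1-y)) ((-1)/(N-1-y)) y :=
      d3.log (ne_of_gt p3)
    have l4 : HasDerivAt Real.log (1/y) y := by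
      simpa [one_div] using Real.hasDerivAt_log (ne_of_gt hy.1)
    have l5 : HasDerivAt (fun y : ℝ => Real.log (N-2*y) - Real.log (N-2) - Real.log y)
        ((-2)/(N-2*y) - 1/y) y := (l1.sub_const (Real.log (N-2))).sub l4
    have := ((l5.const_mul ((N-2)/N)).add l2).sub l3
    refine this.congr_deriv ?_
    ring
  have hFd_neg : ∀ y ∈ Set.Ioo (0:ℝ) 1, deriv F y < 0 := by
    intro y hy
    obtain ⟨p1, p2, p3⟩ := hpos y ⟨hy.1, hy.2.le⟩
    rw [(hderiv y hy).deriv]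
    have hy0 := hy.1
    have e1 : ((N-2)/N)*((-2)/(N-2*y) - 1/y) = -((N-2)/(y*(N-2*y))) := by
      field_simp
      ring
    have e2 : (N-3)/(1+(N-3)*y) + (-(-1))/(N-1-y) = (N-2)^2 / ((1+(N-3)*y)*(N-1-y)) := by
      field_simp
      ring
    have e3 : (N-2)^2 / ((1+(N-3)*y)*(N-1-y)) < (N-2)/(y*(N-2*y)) := by
      rw [div_lt_div_iff₀ (by positivity) (by positivity)]
      have hp : 0 < (N-2)*((N-1)*(1-y)^2) := by
        apply mul_pos (by linarith)
        apply mul_pos (by linarith)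
        nlinarith [hy.2]
      nlinarith [hp]
    calc ((N-2)/N)*((-2)/(N-2*y) - 1/y) + (N-3)/(1+(N-3)*y) + (-(-1))/(N-1-y)
        = -((N-2)/(y*(N-2*y))) + ((N-3)/(1+(N-3)*y) + (-(-1))/(N-1-y)) := by rw [e1]; ring
      _ = -((N-2)/(y*(N-2*y))) + (N-2)^2 / ((1+(N-3)*y)*(N-1-y)) := by rw [e2]
      _ < 0 := by linarith
  have hcont : ContinuousOn F (Set.Ioc 0 1) := by
    have c1 : ContinuousOn (fun y : ℝ => Real.log (N-2*y)) (Set.Ioc 0 1) :=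
      ContinuousOn.log (by fun_prop) (fun y hy => ne_of_gt (hpos y hy).1)
    have c2 : ContinuousOn (fun y : ℝ => Real.log (1+(N-3)*y)) (Set.Ioc 0 1) :=
      ContinuousOn.log (by fun_prop) (fun y hy => ne_of_gt (hpos y hy).2.1)
    have c3 : ContinuousOn (fun y : ℝ => Real.log (N-1-y)) (Set.Ioc 0 1) :=
      ContinuousOn.log (by fun_prop) (fun y hy => ne_of_gt (hpos y hy).2.2)
    have c4 : ContinuousOn (fun y : ℝ => Real.log y) (Set.Ioc 0 1) :=
      ContinuousOn.log (by fun_prop) (fun y hy => ne_of_gt hy.1)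
    exact ((continuousOn_const.mul ((c1.sub continuousOn_const).sub c4)).add c2).sub c3
  have hanti : StrictAntiOn F (Set.Ioc 0 1) :=
    strictAntiOn_of_deriv_neg (convex_Ioc 0 1) hcont
      (by rw [interior_Ioc]; exact hFd_neg)
  have hF1 : F 1 = 0 := by
    rw [hF]
    simp only
    rw [Real.log_one]
    have : N - 2*1 = N-2 := by ring
    rw [this, show 1+(N-3)*1 = N-2 by ring, show N-1-1 = N-2 by ring]
    ring
  have hFx : 0 < F x := by
    have := hanti ⟨hx.1, hx.2.le⟩ ⟨one_pos, le_refl 1⟩ hx.2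
    rw [hF1] at this
    exact this
  obtain ⟨p1, p2, p3⟩ := hpos x ⟨hx.1, hx.2.le⟩
  have g1 : Real.log ((N-1-x)/(1+(N-3)*x)) = Real.log (N-1-x) - Real.log (1+(N-3)*x) :=
    Real.log_div (ne_of_gt p3) (ne_of_gt p2)
  have g2 : Real.log ((N-2*x)/((N-2)*x)) = Real.log (N-2*x) - (Real.log (N-2) + Real.log x) := by
    have hNe : ((N:ℝ)-2)*x ≠ 0 := by
      have : (0:ℝ) < (N-2)*x := mul_pos (by linarith) hx.1
      exact ne_of_gt this
    rw [Real.log_div (ne_of_gt p1) hNe, Real.log_mul (by linarith : (N:ℝ)-2 ≠ 0) (ne_of_gt hx.1)]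
  rw [g1, g2]
  rw [hF] at hFx
  simp only at hFx
  nlinarith [hFx]

lemma key_ineq (hn : 3 ≤ n) {r : ℝ} (hr : r ∈ Set.Ioo (r0 n) 1) :
    (bf n r) * ((n:ℝ)-1-bf n r) < vf n r * (1 + ((n:ℝ)-3)*bf n r) := by
  have h := hN hn
  have hrpos : 0 < r := lt_trans (r0_pos hn) hr.1
  have hb0 : 0 < bf n r := bf_pos hn hrpos hr.2
  have hb1 : bf n r < 1 := bf_lt_one hn hr.1
  set b := bf n r with hbdef
  have hA0 : (0:ℝ) < ((n:ℝ)-2*b)/(((n:ℝ)-2)*b) := by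
    apply div_pos (by nlinarith) (by nlinarith)
  have hC : (0:ℝ) < (n:ℝ)-1-b := by nlinarith
  have hD : (0:ℝ) < 1+((n:ℝ)-3)*b := by nlinarith
  have hkey := key_log (N := (n:ℝ)) h ⟨hb0, hb1⟩
  rw [← Real.log_rpow hA0 (((n:ℝ)-2)/(n:ℝ))] at hkey
  have h1 : ((n:ℝ)-1-b)/(1+((n:ℝ)-3)*b) < (((n:ℝ)-2*b)/(((n:ℝ)-2)*b))^(((n:ℝ)-2)/(n:ℝ)) := by
    rw [← Real.log_lt_log_iff (by positivity) (Real.rpow_pos_of_pos hA0 _)]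
    exact hkey
  have h2 : b*(((n:ℝ)-1-b)/(1+((n:ℝ)-3)*b)) < b*((((n:ℝ)-2*b)/(((n:ℝ)-2)*b))^(((n:ℝ)-2)/(n:ℝ))) :=
    mul_lt_mul_of_pos_left h1 hb0
  have h3 := mul_lt_mul_of_pos_right h2 hD
  calc b * ((n:ℝ)-1-b) = (b*(((n:ℝ)-1-b)/(1+((n:ℝ)-3)*b))) * (1+((n:ℝ)-3)*b) := by
        field_simp
        exact (div_self (by rw [mul_comm]; exact ne_of_gt hD)).symm
    _ < (b*((((n:ℝ)-2*b)/(((n:ℝ)-2)*b))^(((n:ℝ)-2)/(n:ℝ)))) * (1+((n:ℝ)-3)*b) := h3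
    _ = vf n r * (1+((n:ℝ)-3)*b) := by rw [vf_eq hn hr]

lemma vf_hasDeriv (hn : 3 ≤ n) {r : ℝ} (hr : r ∈ Set.Ioo (r0 n) 1) :
    HasDerivAt (vf n) (-(vf n r * ((n:ℝ)*r^2 - ((n:ℝ)-2)) / (r * bf n r))) r := by
  have h := hN hn
  have hrpos : 0 < r := lt_trans (r0_pos hn) hr.1
  have hM : 0 < Mf n r := Mf_pos hrpos hr.2
  have hmm := mMax_pos hn
  have hx0 : 0 < Mf n r / mMax n := div_pos hM hmm
  have hb0 : 0 < bf n r := bf_pos hn hrpos hr.2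
  have hr2 : 0 < 1 - r^2 := by nlinarith [hr.2, hrpos]
  have d1 : HasDerivAt (fun r => Mf n r / mMax n)
      ((-(r^(n-3) * ((n:ℝ)*r^2 - ((n:ℝ)-2))) / 2)/mMax n) r := (Mf_hasDeriv hn).div_const _
  have d2 := d1.rpow_const (p := (2:ℝ)/n) (Or.inl (ne_of_gt hx0))
  have hfun : (fun y => (Mf n y / mMax n) ^ ((2:ℝ)/n)) = vf n := rfl
  rw [hfun] at d2
  convert d2 using 1
  rw [Real.rpow_sub_one (ne_of_gt hx0)]
  have hv : (Mf n r / mMax n)^((2:ℝ)/n) = vf n r := rfl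
  rw [hv, Mf, bf]
  obtain ⟨k, rfl⟩ : ∃ k, n = k + 3 := ⟨n - 3, by omega⟩
  rw [show k+3-3 = k by omega, show k+3-2 = k+1 by omega]
  rw [Mf, show k+3-2 = k+1 by omega] at hM
  push_cast at *
  have hrk : (0:ℝ) < r^k := pow_pos hrpos k
  have hMne : r ^ (k + 1) * (1 - r ^ 2) / 2 ≠ 0 := ne_of_gt hM
  field_simp
  rw [pow_succ]
  ring

lemma Hf_contOn (hn : 3 ≤ n) : ContinuousOn (Hf n) (Set.Ioc (r0 n) 1) := by
  have h := hN hn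
  apply ContinuousOn.div
  · fun_prop
  · apply ContinuousOn.mul (by fun_prop)
    exact ContinuousOn.sub continuousOn_const (fun r _ => (vf_contAt r).continuousWithinAt)
  · intro r hrm
    have hrpos : 0 < r := lt_trans (r0_pos hn) hrm.1
    have hv1 := vf_lt_one hn hrm
    have : 0 < 4*r^2*(1 - vf n r) := by
      apply mul_pos (by positivity) (by linarith)
    exact ne_of_gt this

lemma Hf_one (hn : 3 ≤ n) : Hf n 1 = 1 := by
  rw [Hf, vf_one hn]
  norm_num

lemma Hf_hasDeriv (hn : 3 ≤ n) {r : ℝ} (hr : r ∈ Set.Ioo (r0 n) 1) :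
    HasDerivAt (Hf n)
      (((2*((n:ℝ)*r^2-((n:ℝ)-2))*(2*(n:ℝ)*r)) * (4*r^2*(1 - vf n r))
        - ((n:ℝ)*r^2-((n:ℝ)-2))^2 * (8*r*(1-vf n r) + 4*r^2*(vf n r * ((n:ℝ)*r^2 - ((n:ℝ)-2)) / (r * bf n r))))
       / (4*r^2*(1 - vf n r))^2) r := by
  have h := hN hn
  have hrpos : 0 < r := lt_trans (r0_pos hn) hr.1
  have hv1 := vf_lt_one hn ⟨hr.1, hr.2.le⟩
  have hQ : (4*r^2*(1 - vf n r)) ≠ 0 := by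
    have : 0 < 4*r^2*(1 - vf n r) := mul_pos (by positivity) (by linarith)
    exact ne_of_gt this
  have dW : HasDerivAt (fun r : ℝ => (n:ℝ)*r^2 - ((n:ℝ)-2)) (2*(n:ℝ)*r) r := by
    have := ((hasDerivAt_pow 2 r).const_mul ((n:ℝ))).sub_const ((n:ℝ)-2)
    refine this.congr_deriv ?_
    push_cast
    ring
  have dP : HasDerivAt (fun r : ℝ => ((n:ℝ)*r^2 - ((n:ℝ)-2))^2)
      (2*((n:ℝ)*r^2-((n:ℝ)-2))*(2*(n:ℝ)*r)) r := by
    have := dW.pow 2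
    refine this.congr_deriv ?_
    ring
  have dv := vf_hasDeriv hn hr
  have dQ : HasDerivAt (fun r : ℝ => 4*r^2*(1 - vf n r))
      (8*r*(1-vf n r) + 4*r^2*(vf n r * ((n:ℝ)*r^2 - ((n:ℝ)-2)) / (r * bf n r))) r := by
    have d4 : HasDerivAt (fun r : ℝ => 4*r^2) (8*r) r := by
      have := (hasDerivAt_pow 2 r).const_mul (4:ℝ)
      refine this.congr_deriv ?_
      push_cast
      ring
    have dsub : HasDerivAt (fun r : ℝ => 1 - vf n r)
        (-(-(vf n r * ((n:ℝ)*r^2 - ((n:ℝ)-2)) / (r * bf n r)))) r := dv.const_sub 1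
    have := d4.mul dsub
    refine this.congr_deriv ?_
    ring
  exact dP.div dQ hQ

lemma Hf_deriv_neg (hn : 3 ≤ n) {r : ℝ} (hr : r ∈ Set.Ioo (r0 n) 1) :
    deriv (Hf n) r < 0 := by
  have h := hN hn
  have hrpos : 0 < r := lt_trans (r0_pos hn) hr.1
  have hv1 := vf_lt_one hn ⟨hr.1, hr.2.le⟩
  have hv0 := vf_pos hn hr
  have hb0 : 0 < bf n r := bf_pos hn hrpos hr.2
  have hb1 : bf n r < 1 := bf_lt_one hn hr.1
  have hw : 0 < (n:ℝ)*r^2 - ((n:ℝ)-2) := by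
    have h2 : (n:ℝ)*r^2 = (n:ℝ) - 2*bf n r := by
      rw [r2_eq hn r]; field_simp
    rw [h2]; linarith [hb1]
  have hQ : 0 < 4*r^2*(1 - vf n r) := mul_pos (by positivity) (by linarith)
  rw [(Hf_hasDeriv hn hr).deriv]
  apply div_neg_of_neg_of_pos _ (by positivity)
  -- numerator < 0
  have hkey := key_ineq hn hr
  have hr2pos : 0 < 1 - r^2 := by nlinarith [hr.2, hrpos]
  have hNum : ((2*((n:ℝ)*r^2-((n:ℝ)-2))*(2*(n:ℝ)*r)) * (4*r^2*(1 - vf n r))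
        - ((n:ℝ)*r^2-((n:ℝ)-2))^2 * (8*r*(1-vf n r) + 4*r^2*(vf n r * ((n:ℝ)*r^2 - ((n:ℝ)-2)) / (r * bf n r))))
      = (16*r*((n:ℝ)*r^2-((n:ℝ)-2))/bf n r) * (bf n r*((n:ℝ)-1-bf n r) - vf n r*(1+((n:ℝ)-3)*bf n r)) := by
    simp only [bf]
    have hN0 : (n:ℝ) ≠ 0 := by linarith
    field_simp
    ring
  rw [hNum]
  apply mul_neg_of_pos_of_neg
  · exact div_pos (mul_pos (mul_pos (by norm_num) hrpos) hw) hb0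
  · linarith [hkey]

lemma Hf_anti (hn : 3 ≤ n) : StrictAntiOn (Hf n) (Set.Ioc (r0 n) 1) := by
  apply strictAntiOn_of_deriv_neg (convex_Ioc _ _) (Hf_contOn hn)
  intro r hr
  rw [interior_Ioc] at hr
  exact Hf_deriv_neg hn hr

lemma Hf_gt_one (hn : 3 ≤ n) {r : ℝ} (hr : r ∈ Set.Ioo (r0 n) 1) : 1 < Hf n r := by
  have h1 := Hf_anti hn ⟨hr.1, hr.2.le⟩ ⟨r0_lt_one hn, le_refl 1⟩ hr.2
  rw [Hf_one hn] at h1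
  exact h1

lemma bf_r0 (hn : 3 ≤ n) : bf n (r0 n) = 1 := by
  have h := hN hn
  have hN0 : (n:ℝ) ≠ 0 := by linarith
  rw [bf, r0_sq hn]
  field_simp
  ring

lemma Hf_tendsto (hn : 3 ≤ n) : Tendsto (Hf n) (𝓝[>] (r0 n)) (𝓝 (n:ℝ)) := by
  have h := hN hn
  have hr0pos := r0_pos hn
  have hr01 := r0_lt_one hn
  have hN0 : (n:ℝ) ≠ 0 := by linarith
  have hwpos : ∀ x ∈ Set.Ioo (r0 n) 1, 0 < (n:ℝ)*x^2-((n:ℝ)-2) := by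
    intro x hx
    have hb1 : bf n x < 1 := bf_lt_one hn hx.1
    have h2 : (n:ℝ)*x^2 = (n:ℝ) - 2*bf n x := by
      rw [r2_eq hn x]; field_simp
    rw [h2]; linarith
  have hmain : Tendsto (fun r => ((n:ℝ)*r^2-((n:ℝ)-2))^2 / (1 - vf n r)) (𝓝[>] (r0 n))
      (𝓝 (4*((n:ℝ)-2))) := by
    apply HasDerivAt.lhopital_zero_right_on_Ioo hr01
      (f' := fun r => 2*((n:ℝ)*r^2-((n:ℝ)-2))*(2*(n:ℝ)*r))
      (g' := fun r => vf n r * ((n:ℝ)*r^2 - ((n:ℝ)-2)) / (r * bf n r))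
    · intro x hx
      have dW : HasDerivAt (fun r : ℝ => (n:ℝ)*r^2 - ((n:ℝ)-2)) (2*(n:ℝ)*x) x := by
        have := ((hasDerivAt_pow 2 x).const_mul ((n:ℝ))).sub_const ((n:ℝ)-2)
        refine this.congr_deriv ?_
        push_cast
        ring
      have := dW.pow 2
      refine this.congr_deriv ?_
      ring
    · intro x hx
      have := (vf_hasDeriv hn hx).const_sub 1
      refine this.congr_deriv ?_
      ring
    · intro x hx
      have hxpos : 0 < x := lt_trans hr0pos hx.1
      have hb0 : 0 < bf n x := bf_pos hn hxpos hx.2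
      have hv0 := vf_pos hn hx
      exact ne_of_gt (div_pos (mul_pos hv0 (hwpos x hx)) (mul_pos hxpos hb0))
    · have hc : Continuous (fun r : ℝ => ((n:ℝ)*r^2-((n:ℝ)-2))^2) := by continuity
      have h0 : ((n:ℝ)*(r0 n)^2-((n:ℝ)-2))^2 = 0 := by
        rw [r0_sq hn]; field_simp; ring
      have := hc.tendsto (r0 n)
      rw [h0] at this
      exact this.mono_left nhdsWithin_le_nhds
    · have hv := (vf_contAt (n := n) (r0 n)).tendsto
      rw [vf_r0 hn] at hv
      have : Tendsto (fun r => 1 - vf n r) (𝓝 (r0 n)) (𝓝 (1-1)) := tendsto_const_nhds.sub hv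
      rw [show (1:ℝ)-1 = 0 by norm_num] at this
      exact this.mono_left nhdsWithin_le_nhds
    · have hφ : Tendsto (fun r => 4*(n:ℝ)*r^2 * bf n r / vf n r) (𝓝 (r0 n))
          (𝓝 (4*((n:ℝ)-2))) := by
        have hcnum : ContinuousAt (fun r : ℝ => 4*(n:ℝ)*r^2 * bf n r) (r0 n) := by
          apply ContinuousAt.mul
          · fun_prop
          · have : Continuous (bf n) := by
              have : bf n = fun r => (n:ℝ)*(1-r^2)/2 := rfl
              rw [this]; continuity
            exact this.continuousAt
        have hval : vf n (r0 n) = 1 := vf_r0 hn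
        have hcd : ContinuousAt (fun r => 4*(n:ℝ)*r^2 * bf n r / vf n r) (r0 n) :=
          hcnum.div (vf_contAt (r0 n)) (by rw [hval]; norm_num)
        have := hcd.tendsto
        have hval2 : 4*(n:ℝ)*(r0 n)^2 * bf n (r0 n) / vf n (r0 n) = 4*((n:ℝ)-2) := by
          rw [hval, bf_r0 hn, r0_sq hn]
          field_simp
        rw [hval2] at this
        exact this
      apply Tendsto.congr' _ (hφ.mono_left nhdsWithin_le_nhds)
      filter_upwards [Ioo_mem_nhdsGT hr01] with x hx
      have hxpos : 0 < x := lt_trans hr0pos hx.1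
      have hb0 : 0 < bf n x := bf_pos hn hxpos hx.2
      have hv0 := vf_pos hn hx
      have hw := hwpos x hx
      field_simp
      ring
  have htwo : Tendsto (fun r : ℝ => 1/(4*r^2)) (𝓝[>] (r0 n)) (𝓝 (1/(4*(r0 n)^2))) := by
    have : ContinuousAt (fun r : ℝ => 1/(4*r^2)) (r0 n) := by
      apply ContinuousAt.div continuousAt_const (by fun_prop)
      positivity
    exact this.tendsto.mono_left nhdsWithin_le_nhds
  have hprod := hmain.mul htwo
  have hval : 4*((n:ℝ)-2) * (1/(4*(r0 n)^2)) = (n:ℝ) := by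
    have h2 : (n:ℝ)-2 ≠ 0 := by linarith
    rw [r0_sq hn]
    field_simp
  rw [hval] at hprod
  apply Tendsto.congr _ hprod
  intro x
  rw [Hf, div_mul_div_comm, mul_one, mul_comm (1 - vf n x) (4*x^2)]

lemma Hf_lt (hn : 3 ≤ n) {r : ℝ} (hr : r ∈ Set.Ioc (r0 n) 1) : Hf n r < (n:ℝ) := by
  set r' := (r0 n + r)/2 with hr'def
  have hr'1 : r0 n < r' := by rw [hr'def]; linarith [hr.1]
  have hr'2 : r' < r := by rw [hr'def]; linarith [hr.1]
  have hr'mem : r' ∈ Set.Ioc (r0 n) 1 := ⟨hr'1, le_trans hr'2.le hr.2⟩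
  have h1 : Hf n r < Hf n r' := Hf_anti hn hr'mem hr hr'2
  have h2 : Hf n r' ≤ (n:ℝ) := by
    apply ge_of_tendsto (Hf_tendsto hn)
    filter_upwards [Ioo_mem_nhdsGT hr'1] with s hs
    exact (Hf_anti hn ⟨hs.1, le_trans hs.2.le hr'mem.2⟩ hr'mem hs.2).le
  linarith

end SDS

/-- k_+ is a continuous strictly increasing bijection from [0, m_max)
onto [1, sqrt n), with the stated limits at the endpoints. -/
theorem stmt10 (n : ℕ) (hn : 3 ≤ n) (kp : ℝ → ℝ)
    (hk0 : kp 0 = 1)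
    (hk : ∀ m ∈ Set.Ioo (0 : ℝ) (mMax n), ∀ rp : ℝ,
      IsGreatest {r : ℝ | 0 < r ∧ fSD n m r = 0} rp →
      kp m = Real.sqrt (rp ^ 2 * (1 - ((n : ℝ) - 2) * m * rp ^ (-(n : ℝ))) ^ 2 /
        (1 - (m / mMax n) ^ ((2 : ℝ) / n)))) :
    ContinuousOn kp (Set.Ico 0 (mMax n)) ∧
    StrictMonoOn kp (Set.Ico 0 (mMax n)) ∧
    Set.BijOn kp (Set.Ico 0 (mMax n)) (Set.Ico 1 (Real.sqrt n)) ∧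
    Filter.Tendsto kp (𝓝[>] 0) (𝓝 1) ∧
    Filter.Tendsto kp (𝓝[<] (mMax n)) (𝓝 (Real.sqrt n)) := by
  have hNR : (3:ℝ) ≤ (n:ℝ) := SDS.hN hn
  have hmm := SDS.mMax_pos hn
  have hr01 := SDS.r0_lt_one hn
  have hr0pos := SDS.r0_pos hn
  have hsqrtN1 : 1 < Real.sqrt n := by
    rw [show (1:ℝ) = Real.sqrt 1 from Real.sqrt_one.symm]
    exact Real.sqrt_lt_sqrt (by norm_num) (by linarith)
  have hrep : ∀ m ∈ Set.Ioo (0:ℝ) (mMax n), ∃ r ∈ Set.Ioo (SDS.r0 n) 1,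
      SDS.Mf n r = m ∧ kp m = Real.sqrt (SDS.Hf n r) := by
    intro m hm
    obtain ⟨r, hr, hMr⟩ := SDS.exists_root hn hm
    exact ⟨r, hr, hMr, SDS.kp_eq hn hk hm hr hMr⟩
  have hbounds : ∀ m ∈ Set.Ioo (0:ℝ) (mMax n), 1 < kp m ∧ kp m < Real.sqrt n := by
    intro m hm
    obtain ⟨r, hr, hMr, hkp⟩ := hrep m hm
    have h1 : 1 < SDS.Hf n r := SDS.Hf_gt_one hn hr
    have h2 : SDS.Hf n r < n := SDS.Hf_lt hn ⟨hr.1, hr.2.le⟩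
    constructor
    · rw [hkp, show (1:ℝ) = Real.sqrt 1 from Real.sqrt_one.symm]
      exact Real.sqrt_lt_sqrt (by norm_num) h1
    · rw [hkp]
      exact Real.sqrt_lt_sqrt (by linarith) h2
  have hmono : StrictMonoOn kp (Set.Ico 0 (mMax n)) := by
    intro m1 hm1 m2 hm2 h12
    rcases eq_or_lt_of_le hm1.1 with h0 | h0
    · rw [← h0, hk0]
      exact (hbounds m2 ⟨lt_of_le_of_lt hm1.1 h12, hm2.2⟩).1
    · obtain ⟨r1, hr1, hM1, hkp1⟩ := hrep m1 ⟨h0, hm1.2⟩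
      obtain ⟨r2, hr2, hM2, hkp2⟩ := hrep m2 ⟨lt_trans h0 h12, hm2.2⟩
      have hr21 : r2 < r1 := by
        rcases lt_trichotomy r2 r1 with h | h | h
        · exact h
        · exfalso; rw [h, hM1] at hM2; linarith
        · exfalso
          have := SDS.Mf_anti hn ⟨hr1.1.le, hr1.2.le⟩ ⟨hr2.1.le, hr2.2.le⟩ h
          rw [hM1, hM2] at this
          linarith
      have hH : SDS.Hf n r1 < SDS.Hf n r2 :=
        SDS.Hf_anti hn ⟨hr2.1, hr2.2.le⟩ ⟨hr1.1, hr1.2.le⟩ hr21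
      rw [hkp1, hkp2]
      apply Real.sqrt_lt_sqrt _ hH
      linarith [SDS.Hf_gt_one hn hr1]
  have hmaps : Set.MapsTo kp (Set.Ico 0 (mMax n)) (Set.Ico 1 (Real.sqrt n)) := by
    intro m hm
    rcases eq_or_lt_of_le hm.1 with h0 | h0
    · rw [← h0, hk0]; exact ⟨le_refl 1, hsqrtN1⟩
    · obtain ⟨l, u⟩ := hbounds m ⟨h0, hm.2⟩
      exact ⟨l.le, u⟩
  have hsurj : Set.SurjOn kp (Set.Ico 0 (mMax n)) (Set.Ico 1 (Real.sqrt n)) := by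
    intro y hy
    rcases eq_or_lt_of_le hy.1 with h1 | h1
    · exact ⟨0, ⟨le_refl 0, hmm⟩, by rw [hk0, h1]⟩
    · have hy0 : (0:ℝ) < y := by linarith
      have hy2N : y^2 < n := (Real.lt_sqrt hy0.le).mp hy.2
      have hy21 : 1 < y^2 := by nlinarith
      have hev : ∀ᶠ s in 𝓝[>] (SDS.r0 n), y^2 < SDS.Hf n s ∧ s ∈ Set.Ioo (SDS.r0 n) 1 :=
        ((SDS.Hf_tendsto hn).eventually (eventually_gt_nhds hy2N)).and
          (Filter.eventually_of_mem (Ioo_mem_nhdsGT hr01) (fun x hx => hx))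
      obtain ⟨r', hr'gt, hr'mem⟩ := hev.exists
      have hcont : ContinuousOn (SDS.Hf n) (Set.Icc r' 1) :=
        (SDS.Hf_contOn hn).mono (fun x hx => ⟨lt_of_lt_of_le hr'mem.1 hx.1, hx.2⟩)
      have hivt := intermediate_value_Icc' hr'mem.2.le hcont
      have hy2mem : y^2 ∈ Set.Icc (SDS.Hf n 1) (SDS.Hf n r') := by
        rw [SDS.Hf_one hn]; exact ⟨hy21.le, hr'gt.le⟩
      obtain ⟨r, hrmem, hHr⟩ := hivt hy2mem
      have hrIoo : r ∈ Set.Ioo (SDS.r0 n) 1 := by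
        constructor
        · exact lt_of_lt_of_le hr'mem.1 hrmem.1
        · rcases eq_or_lt_of_le hrmem.2 with he | hlt
          · exfalso; rw [he, SDS.Hf_one hn] at hHr; nlinarith
          · exact hlt
      have hrpos : 0 < r := lt_trans hr0pos hrIoo.1
      have hm : SDS.Mf n r ∈ Set.Ioo 0 (mMax n) :=
        ⟨SDS.Mf_pos hrpos hrIoo.2, SDS.Mf_lt_mMax hn ⟨hrIoo.1, hrIoo.2.le⟩⟩
      have hkp := SDS.kp_eq hn hk hm hrIoo rfl
      refine ⟨SDS.Mf n r, ⟨hm.1.le, hm.2⟩, ?_⟩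
      rw [hkp, hHr, Real.sqrt_sq hy0.le]
  have hcontOn : ContinuousOn kp (Set.Ico 0 (mMax n)) := by
    intro a ha
    have hsGE : Set.Ico (0:ℝ) (mMax n) ∈ 𝓝[≥] a := by
      rw [mem_nhdsWithin]
      exact ⟨Set.Iio (mMax n), isOpen_Iio, ha.2, fun x hx => ⟨le_trans ha.1 hx.2, hx.1⟩⟩
    have hkpa := hmaps ha
    have hright : ContinuousWithinAt kp (Set.Ici a) a := by
      apply hmono.continuousWithinAt_right_of_exists_between hsGE
      intro b hb
      have hlt : kp a < min b (Real.sqrt n) := lt_min hb hkpa.2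
      set y := (kp a + min b (Real.sqrt n))/2 with hydef
      have hy1 : kp a < y := by rw [hydef]; linarith
      have hy2 : y < min b (Real.sqrt n) := by rw [hydef]; linarith
      have hymem : y ∈ Set.Ico 1 (Real.sqrt n) :=
        ⟨le_trans hkpa.1 hy1.le, lt_of_lt_of_le hy2 (min_le_right _ _)⟩
      obtain ⟨c, hc, hcy⟩ := hsurj hymem
      exact ⟨c, hc, by rw [hcy]; exact ⟨hy1, le_of_lt (lt_of_lt_of_le hy2 (min_le_left _ _))⟩⟩
    rcases eq_or_lt_of_le ha.1 with h0 | h0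
    · apply hright.mono
      intro x hx
      rw [← h0]
      exact hx.1
    · have hsLE : Set.Ico (0:ℝ) (mMax n) ∈ 𝓝[≤] a := by
        rw [mem_nhdsWithin]
        exact ⟨Set.Ioi 0, isOpen_Ioi, h0, fun x hx => ⟨le_of_lt hx.1, lt_of_le_of_lt hx.2 ha.2⟩⟩
      have hkpa1 : 1 < kp a := by
        rw [← hk0]
        exact hmono ⟨le_refl 0, hmm⟩ ha h0
      have hleft : ContinuousWithinAt kp (Set.Iic a) a := by
        apply hmono.continuousWithinAt_left_of_exists_between hsLE
        intro b hb
        set y := max b 1 with hydef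
        have hy1 : y < kp a := by rw [hydef]; exact max_lt hb hkpa1
        have hymem : y ∈ Set.Ico 1 (Real.sqrt n) :=
          ⟨le_max_right _ _, lt_trans hy1 hkpa.2⟩
        obtain ⟨c, hc, hcy⟩ := hsurj hymem
        exact ⟨c, hc, by rw [hcy]; exact ⟨le_max_left _ _, hy1⟩⟩
      have : ContinuousAt kp a := continuousAt_iff_continuous_left_right.mpr ⟨hleft, hright⟩
      exact this.continuousWithinAt
  refine ⟨hcontOn, hmono, ⟨hmaps, hmono.injOn, hsurj⟩, ?_, ?_⟩
  · -- limit at 0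
    have h1 : ContinuousWithinAt kp (Set.Ico 0 (mMax n)) 0 := hcontOn 0 ⟨le_refl 0, hmm⟩
    have h2 : Filter.Tendsto kp (𝓝[Set.Ico 0 (mMax n)] 0) (𝓝 1) := by
      rw [← hk0]; exact h1
    have h3 : 𝓝[>] (0:ℝ) = 𝓝[Set.Ioo (0:ℝ) (mMax n)] 0 :=
      (nhdsWithin_Ioo_eq_nhdsGT hmm).symm
    rw [h3]
    exact h2.mono_left (nhdsWithin_mono 0 (fun x hx => ⟨hx.1.le, hx.2⟩))
  · -- limit at mMax
    have hne : (Set.Ioo (0:ℝ) (mMax n)).Nonempty := ⟨mMax n/2, by constructor <;> [positivity; linarith]⟩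
    have hmonoOn : MonotoneOn kp (Set.Ioo 0 (mMax n)) :=
      (hmono.mono (fun x hx => ⟨hx.1.le, hx.2⟩)).monotoneOn
    have hbdd : BddAbove (kp '' Set.Ioo 0 (mMax n)) := by
      refine ⟨Real.sqrt n, ?_⟩
      rintro _ ⟨x, hx, rfl⟩
      exact (hbounds x hx).2.le
    have htend := hmonoOn.tendsto_nhdsWithin_Ioo_left hne hbdd
    have himg : kp '' Set.Ioo 0 (mMax n) = Set.Ioo 1 (Real.sqrt n) := by
      apply Set.Subset.antisymm
      · rintro _ ⟨x, hx, rfl⟩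
        exact ⟨(hbounds x hx).1, (hbounds x hx).2⟩
      · intro y hy
        obtain ⟨c, hc, hcy⟩ := hsurj ⟨hy.1.le, hy.2⟩
        have hc0 : 0 < c := by
          rcases eq_or_lt_of_le hc.1 with h0 | h0
          · exfalso; rw [← h0, hk0] at hcy; rw [← hcy] at hy; exact lt_irrefl 1 hy.1
          · exact h0
        exact ⟨c, ⟨hc0, hc.2⟩, hcy⟩
    rw [himg, csSup_Ioo hsqrtN1] at htend
    exact htend
end

section
/- Let n ≥ 3 be an integer and let m > -m_max be a real number. Then the set of positive zeros of p_m(r) = -1 + r^2 - 2m·r^(2-n) is nonempty and has a greatest element r_0(m), and p_m(r) > 0 for all r > r_0(m). Moreover, if m ≥ 0 then p_m has exactly one positive zero, while if -m_max < m < 0 then p_m has exactly two positive zeros. -/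
open Set Filter Topology

noncomputable def pSAdS (n : ℕ) (m r : ℝ) : ℝ := -1 + r ^ 2 - 2 * m * r ^ (2 - (n : ℝ))

lemma hasDerivAt_pSAdS (n : ℕ) (m r : ℝ) (hr : 0 < r) :
    HasDerivAt (pSAdS n m) (2 * r - 2 * m * ((2 - (n:ℝ)) * r ^ (2 - (n:ℝ) - 1))) r := by
  have h1 : HasDerivAt (fun x : ℝ => x ^ 2) (2 * r) r := by
    simpa using hasDerivAt_pow 2 r
  have h2 : HasDerivAt (fun x : ℝ => x ^ (2 - (n:ℝ))) ((2 - (n:ℝ)) * r ^ (2 - (n:ℝ) - 1)) r :=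
    Real.hasDerivAt_rpow_const (Or.inl hr.ne')
  have h3 := (h1.const_add (-1)).sub (h2.const_mul (2*m))
  exact h3

lemma pSAdS_strictMonoOn (n : ℕ) (hn : 3 ≤ n) (m : ℝ) (hm : 0 ≤ m) :
    StrictMonoOn (pSAdS n m) (Ioi 0) := by
  apply strictMonoOn_of_deriv_pos (convex_Ioi 0)
  · exact fun x hx => ((hasDerivAt_pSAdS n m x hx).continuousAt).continuousWithinAt
  · intro x hx
    rw [interior_Ioi] at hx
    rw [(hasDerivAt_pSAdS n m x hx).deriv]
    have h1 : (2 - (n:ℝ)) ≤ 0 := by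
      have : (3:ℝ) ≤ n := by exact_mod_cast hn
      linarith
    have h2 : (0:ℝ) < x ^ (2 - (n:ℝ) - 1) := Real.rpow_pos_of_pos hx _
    have hx0 : (0:ℝ) < x := hx
    nlinarith [mul_nonneg hm h2.le, mul_nonneg (mul_nonneg hm h2.le) (neg_nonneg.2 h1)]

lemma mMax_eq (n : ℕ) (hn : 3 ≤ n) :
    mMax n = Real.sqrt (((n:ℝ)-2)/n) ^ ((n:ℝ) - 2) / n := by
  have hn0 : (0:ℝ) < n := by positivity
  have hn2 : (0:ℝ) < (n:ℝ) - 2 := by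
    have : (3:ℝ) ≤ n := by exact_mod_cast hn
    linarith
  set t : ℝ := ((n:ℝ)-2)/n with ht
  have htpos : 0 < t := by positivity
  have hc : ((n-2:ℕ):ℝ) = (n:ℝ) - 2 := by
    push_cast [Nat.cast_sub (by omega : 2 ≤ n)]; ring
  have h1 : Real.sqrt t ^ ((n:ℝ)-2) = t ^ ((1:ℝ)/2 * ((n:ℝ)-2)) := by
    rw [Real.sqrt_eq_rpow, ← Real.rpow_mul htpos.le]
  have hsq : (Real.sqrt t ^ ((n:ℝ) - 2)) ^ 2 = t ^ (n-2) := by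
    rw [h1, ← Real.rpow_natCast (t ^ ((1:ℝ)/2 * ((n:ℝ)-2))) 2, ← Real.rpow_mul htpos.le]
    rw [show (1:ℝ)/2 * ((n:ℝ)-2) * (2:ℕ) = ((n-2:ℕ):ℝ) by rw [hc]; push_cast; ring]
    rw [Real.rpow_natCast]
  have harg : ((n:ℝ)-2) ^ (n-2) / (n:ℝ) ^ n = (Real.sqrt t ^ ((n:ℝ)-2) / n) ^ 2 := by
    rw [div_pow, hsq, ht, div_pow, div_div, ← pow_add]
    rw [show n - 2 + 2 = n by omega]
  rw [mMax, harg, Real.sqrt_sq (by positivity)]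

/-- For -mMax < m < 0, p is negative at x̂ = √((n-2)/n). -/
lemma pSAdS_neg_at_xhat (n : ℕ) (hn : 3 ≤ n) (m : ℝ) (hm : -mMax n < m) (hm0 : m < 0) :
    pSAdS n m (Real.sqrt (((n:ℝ)-2)/n)) < 0 := by
  have hn0 : (0:ℝ) < n := by positivity
  have hn2 : (0:ℝ) < (n:ℝ) - 2 := by
    have : (3:ℝ) ≤ n := by exact_mod_cast hn
    linarith
  set t : ℝ := ((n:ℝ)-2)/n with ht
  have htpos : 0 < t := by positivity
  set x : ℝ := Real.sqrt t with hxdef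
  have hx : 0 < x := Real.sqrt_pos.2 htpos
  have hA : (0:ℝ) < x ^ ((n:ℝ)-2) := Real.rpow_pos_of_pos hx _
  have hinv : x ^ (2 - (n:ℝ)) = (x ^ ((n:ℝ)-2))⁻¹ := by
    rw [show (2 - (n:ℝ)) = -((n:ℝ)-2) by ring, Real.rpow_neg hx.le]
  have hx2 : x ^ 2 = t := Real.sq_sqrt htpos.le
  have hmm : -m < x ^ ((n:ℝ)-2) / n := by
    have := mMax_eq n hn
    rw [this] at hm
    linarith
  rw [pSAdS, hx2, hinv]
  have hmm' : -m * n < x ^ ((n:ℝ)-2) := (lt_div_iff₀ hn0).1 hmm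
  set A : ℝ := x ^ ((n:ℝ)-2) with hAdef
  have hpos : (0:ℝ) < (n:ℝ) * A := by positivity
  have h2 : (-1 + t - 2*m*A⁻¹) * ((n:ℝ) * A) = -2*A - 2*m*(n:ℝ) := by
    field_simp [ht]
    have htn : t * (n:ℝ) = (n:ℝ) - 2 := by rw [ht]; exact div_mul_cancel₀ _ hn0.ne'
    linear_combination A * htn
  have h3 : (-1 + t - 2*m*A⁻¹) * ((n:ℝ) * A) < 0 := by
    rw [h2]; linarith
  by_contra hcon
  push_neg at hcon
  nlinarith [mul_nonneg hcon hpos.le]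

section NegMass
variable (n : ℕ) (m : ℝ)

lemma deriv_pSAdS_eq (hm0 : m < 0) {x : ℝ} (hx : 0 < x) :
    deriv (pSAdS n m) x = 2 * x ^ (2-(n:ℝ)-1) * (x ^ n - (-m * ((n:ℝ)-2))) := by
  rw [(hasDerivAt_pSAdS n m x hx).deriv]
  have hxn : (x:ℝ) ^ n = x ^ ((n:ℝ)) := (Real.rpow_natCast x n).symm
  rw [hxn]
  have hxx : x ^ (2-(n:ℝ)-1) * x ^ ((n:ℝ)) = x := by
    rw [← Real.rpow_add hx, show 2-(n:ℝ)-1+(n:ℝ) = 1 by ring, Real.rpow_one]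
  linear_combination (-2:ℝ) * hxx

lemma pSAdS_strictAntiOn (hn : 3 ≤ n) (hm0 : m < 0) :
    StrictAntiOn (pSAdS n m) (Ioc 0 ((-m * ((n:ℝ)-2)) ^ ((n:ℝ)⁻¹))) := by
  have hn2 : (0:ℝ) < (n:ℝ) - 2 := by
    have : (3:ℝ) ≤ n := by exact_mod_cast hn
    linarith
  have hK : (0:ℝ) < -m * ((n:ℝ)-2) := by nlinarith
  set K := -m * ((n:ℝ)-2) with hKdef
  set rc := K ^ ((n:ℝ)⁻¹) with hrcdef
  have hrc : 0 < rc := Real.rpow_pos_of_pos hK _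
  have hrcn : rc ^ n = K := Real.rpow_inv_natCast_pow hK.le (by omega)
  apply strictAntiOn_of_deriv_neg (convex_Ioc 0 rc)
  · exact fun x hx => ((hasDerivAt_pSAdS n m x hx.1).continuousAt).continuousWithinAt
  · intro x hx
    rw [interior_Ioc] at hx
    rw [deriv_pSAdS_eq n m hm0 hx.1, ← hKdef]
    have h1 : (0:ℝ) < x ^ (2-(n:ℝ)-1) := Real.rpow_pos_of_pos hx.1 _
    have h2 : x ^ n < K := by
      rw [← hrcn]
      exact pow_lt_pow_left₀ hx.2 hx.1.le (by omega)
    nlinarith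

lemma pSAdS_strictMonoOn_right (hn : 3 ≤ n) (hm0 : m < 0) :
    StrictMonoOn (pSAdS n m) (Ici ((-m * ((n:ℝ)-2)) ^ ((n:ℝ)⁻¹))) := by
  have hn2 : (0:ℝ) < (n:ℝ) - 2 := by
    have : (3:ℝ) ≤ n := by exact_mod_cast hn
    linarith
  have hK : (0:ℝ) < -m * ((n:ℝ)-2) := by nlinarith
  set K := -m * ((n:ℝ)-2) with hKdef
  set rc := K ^ ((n:ℝ)⁻¹) with hrcdef
  have hrc : 0 < rc := Real.rpow_pos_of_pos hK _
  have hrcn : rc ^ n = K := Real.rpow_inv_natCast_pow hK.le (by omega)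
  apply strictMonoOn_of_deriv_pos (convex_Ici rc)
  · exact fun x hx => ((hasDerivAt_pSAdS n m x (hrc.trans_le hx)).continuousAt).continuousWithinAt
  · intro x hx
    rw [interior_Ici] at hx
    have hx0 : 0 < x := hrc.trans hx
    rw [deriv_pSAdS_eq n m hm0 hx0, ← hKdef]
    have h1 : (0:ℝ) < x ^ (2-(n:ℝ)-1) := Real.rpow_pos_of_pos hx0 _
    have h2 : K < x ^ n := by
      rw [← hrcn]
      exact pow_lt_pow_left₀ hx hrc.le (by omega)
    nlinarith

end NegMass

/-- for m > -m_max the set of positive zeros of p_m has a greatest element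
r₀(m), p_m > 0 beyond it; for m ≥ 0 there is exactly one positive zero, for
-m_max < m < 0 exactly two. -/
theorem stmt15 (n : ℕ) (hn : 3 ≤ n) (m : ℝ) (hm : -mMax n < m) :
    ∃ r₀ : ℝ, IsGreatest {r : ℝ | 0 < r ∧ pSAdS n m r = 0} r₀ ∧
      (∀ r, r₀ < r → 0 < pSAdS n m r) ∧
      (0 ≤ m → ∀ r, 0 < r → pSAdS n m r = 0 → r = r₀) ∧
      (m < 0 → ∃ r₁ : ℝ, 0 < r₁ ∧ r₁ < r₀ ∧ pSAdS n m r₁ = 0 ∧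
        ∀ r, 0 < r → pSAdS n m r = 0 → r = r₁ ∨ r = r₀) := by
  have hn2 : (0:ℝ) < (n:ℝ) - 2 := by
    have : (3:ℝ) ≤ n := by exact_mod_cast hn
    linarith
  have hn3 : (3:ℝ) ≤ n := by exact_mod_cast hn
  have hexp : 2 - (n:ℝ) ≤ -1 := by linarith
  rcases le_or_gt 0 m with hm0 | hm0
  · -- nonnegative mass : strictly monotone, one zero
    have SM := pSAdS_strictMonoOn n hn m hm0
    set b : ℝ := 2 + 2*m with hbdef
    have hb1 : (1:ℝ) ≤ b := by linarith
    have hpb : 0 < pSAdS n m b := by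
      have h1 : b ^ (2-(n:ℝ)) ≤ 1 :=
        Real.rpow_le_one_of_one_le_of_nonpos hb1 (by linarith)
      have h2 : (0:ℝ) < b ^ (2-(n:ℝ)) := Real.rpow_pos_of_pos (by linarith) _
      have h3 : 2*m*(b ^ (2-(n:ℝ))) ≤ 2*m := by nlinarith
      rw [pSAdS]; nlinarith
    have hpa : pSAdS n m (1/2 : ℝ) < 0 := by
      have h2 : (0:ℝ) < (1/2:ℝ) ^ (2-(n:ℝ)) := Real.rpow_pos_of_pos (by norm_num) _
      rw [pSAdS]; nlinarith
    have hab : (1/2:ℝ) ≤ b := by linarith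
    have cont : ContinuousOn (pSAdS n m) (Icc (1/2) b) := fun x hx =>
      ((hasDerivAt_pSAdS n m x (lt_of_lt_of_le (by norm_num) hx.1)).continuousAt).continuousWithinAt
    obtain ⟨r₀, hr₀mem, hr₀⟩ := intermediate_value_Icc hab cont ⟨hpa.le, hpb.le⟩
    have hr₀pos : 0 < r₀ := lt_of_lt_of_le (by norm_num) hr₀mem.1
    have uniq : ∀ r, 0 < r → pSAdS n m r = 0 → r = r₀ := by
      intro r hr hpr
      exact SM.injOn hr hr₀pos (by rw [hpr, hr₀])
    refine ⟨r₀, ⟨⟨hr₀pos, hr₀⟩, ?_⟩, ?_, fun _ => uniq, fun h => absurd h (not_lt.2 hm0)⟩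
    · intro r hr
      rw [uniq r hr.1 hr.2]
    · intro r hr
      have := SM hr₀pos (hr₀pos.trans hr) hr
      rwa [hr₀] at this
  · -- negative mass
    have hK : (0:ℝ) < -m * ((n:ℝ)-2) := by nlinarith
    set rc : ℝ := (-m * ((n:ℝ)-2)) ^ ((n:ℝ)⁻¹) with hrcdef
    have hrc : 0 < rc := Real.rpow_pos_of_pos hK _
    have SA := pSAdS_strictAntiOn n m hn hm0
    have SMr := pSAdS_strictMonoOn_right n m hn hm0
    rw [← hrcdef] at SA SMr
    -- p rc < 0
    set xh : ℝ := Real.sqrt (((n:ℝ)-2)/n) with hxhdef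
    have hxhpos : 0 < xh := Real.sqrt_pos.2 (by positivity)
    have hpxh : pSAdS n m xh < 0 := pSAdS_neg_at_xhat n hn m hm hm0
    have hprc : pSAdS n m rc < 0 := by
      rcases le_total xh rc with h | h
      · exact lt_of_le_of_lt (SA.antitoneOn ⟨hxhpos, h⟩ ⟨hrc, le_rfl⟩ h) hpxh
      · exact lt_of_le_of_lt (SMr.monotoneOn (self_mem_Ici) h h) hpxh
    -- small point
    set a : ℝ := min (min (-m) 1) (rc/2) with hadef
    have ha0 : 0 < a := by
      apply lt_min (lt_min (by linarith) one_pos) (by linarith)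
    have ha_m : a ≤ -m := le_trans (min_le_left _ _) (min_le_left _ _)
    have ha_1 : a ≤ 1 := le_trans (min_le_left _ _) (min_le_right _ _)
    have ha_rc : a < rc := lt_of_le_of_lt (min_le_right _ _) (by linarith)
    have hpa : 0 < pSAdS n m a := by
      have h1 : a ^ (-1:ℝ) ≤ a ^ (2-(n:ℝ)) :=
        Real.rpow_le_rpow_of_exponent_ge ha0 ha_1 hexp
      rw [Real.rpow_neg_one] at h1
      have h2 : (1:ℝ) ≤ (-m) * a⁻¹ := by
        rw [← div_eq_mul_inv]
        exact (one_le_div ha0).2 ha_m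
      have h3 : 2*(-m)*a⁻¹ ≤ 2*(-m)*a^(2-(n:ℝ)) :=
        mul_le_mul_of_nonneg_left h1 (by linarith)
      have h4 : (2:ℝ) ≤ 2*(-m)*a^(2-(n:ℝ)) := by nlinarith
      rw [pSAdS]; nlinarith [sq_nonneg a]
    -- big point
    set b : ℝ := rc + 2 with hbdef
    have hrcb : rc < b := by linarith
    have hpb : 0 < pSAdS n m b := by
      have h1 : (0:ℝ) < (-2*m) * b^(2-(n:ℝ)) :=
        mul_pos (by linarith) (Real.rpow_pos_of_pos (by linarith) _)
      rw [pSAdS]; nlinarith [sq_nonneg rc]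
    -- zeros on each branch
    have cont1 : ContinuousOn (pSAdS n m) (Icc a rc) := fun x hx =>
      ((hasDerivAt_pSAdS n m x (lt_of_lt_of_le ha0 hx.1)).continuousAt).continuousWithinAt
    have cont2 : ContinuousOn (pSAdS n m) (Icc rc b) := fun x hx =>
      ((hasDerivAt_pSAdS n m x (lt_of_lt_of_le hrc hx.1)).continuousAt).continuousWithinAt
    obtain ⟨r₁, hr₁mem, hr₁⟩ := intermediate_value_Icc' ha_rc.le cont1 ⟨hprc.le, hpa.le⟩
    obtain ⟨r₀, hr₀mem, hr₀⟩ := intermediate_value_Icc hrcb.le cont2 ⟨hprc.le, hpb.le⟩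
    have hr₁pos : 0 < r₁ := lt_of_lt_of_le ha0 hr₁mem.1
    have hr₁rc : r₁ < rc := lt_of_le_of_ne hr₁mem.2 (by
      intro h; apply hprc.ne; rw [← h]; exact hr₁)
    have hrc_r₀ : rc < r₀ := lt_of_le_of_ne hr₀mem.1 (by
      intro h; apply hprc.ne; rw [h]; exact hr₀)
    have hr₀pos : 0 < r₀ := hrc.trans hrc_r₀
    have uniq : ∀ r, 0 < r → pSAdS n m r = 0 → r = r₁ ∨ r = r₀ := by
      intro r hr hpr
      rcases le_total r rc with h | h
      · exact Or.inl (SA.injOn ⟨hr, h⟩ ⟨hr₁pos, hr₁mem.2⟩ (by rw [hpr, hr₁]))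
      · exact Or.inr (SMr.injOn h hr₀mem.1 (by rw [hpr, hr₀]))
    refine ⟨r₀, ⟨⟨hr₀pos, hr₀⟩, ?_⟩, ?_, fun h => absurd h (not_le.2 hm0), fun _ =>
      ⟨r₁, hr₁pos, hr₁rc.trans hrc_r₀, hr₁, uniq⟩⟩
    · intro r hr
      rcases uniq r hr.1 hr.2 with h | h
      · rw [h]; exact (hr₁rc.trans hrc_r₀).le
      · rw [h]
    · intro r hr
      have := SMr hr₀mem.1 (hr₀mem.1.trans hr.le) hr
      rwa [hr₀] at this
end
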